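/- arXiv:2308.06295 — 3 statements merged into one kernel-verified Lean document; each statement's English description precedes it below -/
import Mathlib

section
/- For each fixed τ > 1/e, the function x_τ strictly decreases from the value 1 at t = 0 to the value 0 at its first positive zero ϱ(τ) (in particular x_τ has a positive zero, so ϱ(τ) is finite, and x_τ is strictly decreasing on [0, ϱ(τ)]). Moreover, the map τ ↦ ϱ(τ) is continuous on (1/e, ∞), strictly decreasing on (1/e, 1], and satisfies ϱ(τ) = 1 for all τ ≥ 1. -/
open Real MeasureTheory Filter Set

noncomputable section

/-- `x` is the solution of `x'(t) = -x(t-τ)` with `x ≡ 1` on `(-∞,0]`: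
`x(t) = 1 - ∫_0^t x(s-τ) ds` for `t ≥ 0`. -/
def IsXSol (τ : ℝ) (x : ℝ → ℝ) : Prop :=
  Continuous x ∧ (∀ t ≤ (0:ℝ), x t = 1) ∧
    ∀ t ≥ (0:ℝ), x t = 1 - ∫ s in (0:ℝ)..t, x (s - τ)

/-- The first positive root of a function. -/
noncomputable def firstRoot (x : ℝ → ℝ) : ℝ := sInf {t : ℝ | 0 < t ∧ x t = 0}

/-- `ψ` is the solution of `ψ'(t) = max{x_τ(ϱ(τ)+t-τ), ψ(t)}` on `[0,τ]`,
`ψ'(t) = ψ(t)` on `[τ,∞)`, `ψ(0) = 0`. -/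
def IsPsiSol (τ ρ : ℝ) (xτ ψ : ℝ → ℝ) : Prop :=
  ContinuousOn ψ (Ici (0:ℝ)) ∧ ψ 0 = 0 ∧
    (∀ t ∈ Icc (0:ℝ) τ, ψ t = ∫ s in (0:ℝ)..t, max (xτ (ρ + s - τ)) (ψ s)) ∧
    (∀ t ≥ τ, ψ t = ψ τ + ∫ s in τ..t, ψ s)

/-- A (continuous, integrated-form) solution of the delay equation
`x'(t) = p(t) x(τ̄(t))` on `[t₀,∞)`. -/
def IsDelaySolution (p τd : ℝ → ℝ) (t₀ : ℝ) (x : ℝ → ℝ) : Prop :=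
  Continuous x ∧ ∀ t ≥ t₀, x t = x t₀ + ∫ s in t₀..t, p s * x (τd s)

/-- `x` is `α`-oscillating: eventually every interval on which `x` has no zero
has length at most `α`. -/
def AlphaOscillating (α : ℝ) (x : ℝ → ℝ) : Prop :=
  ∃ T : ℝ, ∀ a b : ℝ, T ≤ a → a < b → (∀ t ∈ Ioo a b, x t ≠ 0) → b - a ≤ α

/-- `x` is oscillatory: it has arbitrarily large zeros. -/
def Oscillatory (x : ℝ → ℝ) : Prop := ∀ T : ℝ, ∃ t ≥ T, x t = 0

open Topology

/-!
If `x_τ` had no positive zero it would be positive and decreasing, and integrating the equation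
over `[t - τ, t]` shows `x(t - τ) ≥ Aₙ x(t)` for `t ≥ nτ`, where `A₀ = 1`, `Aₙ₊₁ = exp (τ Aₙ)`
grows like `(eτ)ⁿ` since `e y ≤ exp y`; two integration steps of length `τ / 2` bound the same
ratio by `4 / τ²`, which is absurd when `eτ > 1`. On `[0, τ]` one has `x_τ(t) = 1 - t`, whence
`ϱ(τ) = 1` for `τ ≥ 1`, and `x_τ` decreases strictly on `[0, ϱ(τ) + τ]`.

By variation of constants (Duhamel's formula, proved with Fubini on a triangle and uniqueness
for the delay equation by the method of steps),
`x_{τ₁}(t) - x_{τ₂}(t) = ∫₀ᵗ x_{τ₁}(t - s - τ₁) (x_{τ₂}(s - τ₂) - x_{τ₂}(s - τ₁)) ds`.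
Bounding the integrand gives `|x_{τ₁}(t) - x_{τ₂}(t)| ≤ t e^{2t} |τ₁ - τ₂|`, so `x_τ → x_{τ₀}`
locally uniformly and the sign-changing first zero moves continuously. For `τ₁ < τ₂ ≤ 1` the
integrand at `t = ϱ(τ₁)` is nonnegative and positive on `(τ₁, min ϱ(τ₁) τ₂)`, so
`x_{τ₂}(ϱ(τ₁)) < 0` and `ϱ(τ₂) < ϱ(τ₁)`.
-/

section FirstRoot

variable {f : ℝ → ℝ} {a b t : ℝ}

lemma firstRoot_nonneg : 0 ≤ firstRoot f :=
  Real.sInf_nonneg fun _ ht => ht.1.le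

lemma firstRoot_le (ht : 0 < t) (hft : f t = 0) : firstRoot f ≤ t :=
  csInf_le ⟨0, fun _ hs => hs.1.le⟩ ⟨ht, hft⟩

lemma le_firstRoot (hex : ∃ t > 0, f t = 0) (h : ∀ t ∈ Ioo 0 a, f t ≠ 0) : a ≤ firstRoot f := by
  obtain ⟨t₀, ht₀, hft₀⟩ := hex
  refine le_csInf ⟨t₀, ht₀, hft₀⟩ fun t ⟨ht, hft⟩ => ?_
  by_contra! hta
  exact h t ⟨ht, hta⟩ hft

lemma pos_of_forall_ne_zero (hf : Continuous f) (h0 : 0 < f 0) (ht : 0 ≤ t)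
    (h : ∀ s ∈ Ioc 0 t, f s ≠ 0) : 0 < f t := by
  by_contra! hft
  obtain ⟨s, hs, hfs⟩ := intermediate_value_Icc' ht hf.continuousOn ⟨hft, h0.le⟩
  rcases hs.1.eq_or_lt with rfl | hs0
  · exact h0.ne' hfs
  · exact h s ⟨hs0, hs.2⟩ hfs

lemma pos_of_lt_firstRoot (hf : Continuous f) (h0 : 0 < f 0) (ht0 : 0 ≤ t)
    (ht : t < firstRoot f) : 0 < f t :=
  pos_of_forall_ne_zero hf h0 ht0 fun _ hs hfs => (firstRoot_le hs.1 hfs).not_gt (hs.2.trans_lt ht)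

lemma firstRoot_lt_of_neg (hf : Continuous f) (h0 : 0 < f 0) (hb : 0 ≤ b) (hfb : f b < 0) :
    firstRoot f < b := by
  obtain ⟨s, hs, hfs⟩ := intermediate_value_Ioo' hb hf.continuousOn ⟨hfb, h0⟩
  exact (firstRoot_le hs.1 hfs).trans_lt hs.2

/-- Roots bounded away from `0` form a closed set, so the infimum is attained. -/
lemma apply_firstRoot (hf : Continuous f) (hex : ∃ t > 0, f t = 0) (ha : 0 < a)
    (h : ∀ t ∈ Ioo 0 a, f t ≠ 0) : f (firstRoot f) = 0 := by
  have hroots : {t | 0 < t ∧ f t = 0} = Ici a ∩ f ⁻¹' {0} := by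
    ext t
    refine ⟨fun ⟨ht, hft⟩ => ⟨not_lt.1 fun hta => h t ⟨ht, hta⟩ hft, hft⟩,
      fun ⟨hat, hft⟩ => ⟨ha.trans_le hat, hft⟩⟩
  have hclosed : IsClosed {t | 0 < t ∧ f t = 0} := by
    rw [hroots]
    exact isClosed_Ici.inter (isClosed_singleton.preimage hf)
  obtain ⟨t₀, ht₀, hft₀⟩ := hex
  exact (hclosed.csInf_mem ⟨t₀, ht₀, hft₀⟩ ⟨0, fun _ hs => hs.1.le⟩).2

end FirstRoot

namespace IsXSol

variable {τ : ℝ} {x : ℝ → ℝ} {a b t T : ℝ}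

lemma continuous_delay (hx : IsXSol τ x) : Continuous fun s => x (s - τ) :=
  hx.1.comp (continuous_sub_right τ)

lemma apply_zero (hx : IsXSol τ x) : x 0 = 1 :=
  hx.2.1 0 le_rfl

lemma apply_max_zero (hx : IsXSol τ x) (t : ℝ) : x (max t 0) = x t := by
  rcases le_total t 0 with ht | ht
  · rw [max_eq_right ht, hx.apply_zero, hx.2.1 t ht]
  · rw [max_eq_left ht]

lemma eq_one_sub (hx : IsXSol τ x) (h0 : 0 ≤ t) (hτ : t ≤ τ) : x t = 1 - t := by
  rw [hx.2.2 t h0, intervalIntegral.integral_congr (g := fun _ => (1 : ℝ)),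
    intervalIntegral.integral_const, smul_eq_mul, mul_one, sub_zero]
  intro s hs
  rw [uIcc_of_le h0] at hs
  exact hx.2.1 _ (by linarith [hs.2])

lemma apply_pos_of_lt_min (hx : IsXSol τ x) (ht : t < min τ 1) : 0 < x t := by
  rcases le_total t 0 with h0 | h0
  · rw [hx.2.1 t h0]
    exact one_pos
  · rw [hx.eq_one_sub h0 (ht.le.trans (min_le_left _ _))]
    linarith [min_le_right τ 1]

lemma hasDerivAt (hx : IsXSol τ x) (ht : 0 < t) : HasDerivAt x (-x (t - τ)) t := by
  have hint : HasDerivAt (fun r => ∫ s in (0 : ℝ)..r, x (s - τ)) (x (t - τ)) t :=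
    intervalIntegral.integral_hasDerivAt_right (hx.continuous_delay.intervalIntegrable _ _)
      (hx.continuous_delay.stronglyMeasurableAtFilter _ _) hx.continuous_delay.continuousAt
  refine (hint.const_sub 1).congr_of_eventuallyEq ?_
  filter_upwards [Ioi_mem_nhds ht] with r hr
  exact hx.2.2 r (le_of_lt hr)

lemma sub_eq_integral (hx : IsXSol τ x) (ha : 0 ≤ a) (hb : 0 ≤ b) :
    x a - x b = ∫ s in a..b, x (s - τ) := by
  rw [hx.2.2 a ha, hx.2.2 b hb, ← intervalIntegral.integral_interval_sub_left
    (hx.continuous_delay.intervalIntegrable 0 b) (hx.continuous_delay.intervalIntegrable 0 a)]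
  ring

lemma antitoneOn_Iic (hx : IsXSol τ x) (h : ∀ t ∈ Ioo 0 b, 0 ≤ x (t - τ)) :
    AntitoneOn x (Iic b) := by
  have hIcc : AntitoneOn x (Icc 0 (max b 0)) := by
    refine antitoneOn_of_hasDerivWithinAt_nonpos (f' := fun t => -x (t - τ)) (convex_Icc _ _)
      hx.1.continuousOn (fun t ht => ?_) fun t ht => ?_
    all_goals rw [interior_Icc] at ht
    · exact (hx.hasDerivAt ht.1).hasDerivWithinAt
    · exact neg_nonpos.2 (h t ⟨ht.1, (lt_max_iff.1 ht.2).resolve_right ht.1.not_gt⟩)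
  intro u hu v hv huv
  rw [← hx.apply_max_zero u, ← hx.apply_max_zero v]
  exact hIcc ⟨le_max_right _ _, max_le_max_right 0 hu⟩ ⟨le_max_right _ _, max_le_max_right 0 hv⟩
    (max_le_max_right 0 huv)

lemma strictAntiOn_Icc (hx : IsXSol τ x) (h : ∀ t ∈ Ioo 0 b, 0 < x (t - τ)) :
    StrictAntiOn x (Icc 0 b) := by
  refine strictAntiOn_of_hasDerivWithinAt_neg (f' := fun t => -x (t - τ)) (convex_Icc 0 b)
    hx.1.continuousOn (fun t ht => ?_) fun t ht => ?_
  all_goals rw [interior_Icc] at ht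
  · exact (hx.hasDerivAt ht.1).hasDerivWithinAt
  · exact neg_neg_iff_pos.2 (h t ht)

lemma abs_le_exp (hx : IsXSol τ x) (hτ : 0 < τ) (ht : 0 ≤ t) : |x t| ≤ exp t := by
  suffices h : ∀ n : ℕ, ∀ t, 0 ≤ t → t ≤ n * τ → |x t| ≤ exp t by
    obtain ⟨n, hn⟩ := exists_nat_ge (t / τ)
    exact h n t ht ((div_le_iff₀ hτ).1 hn)
  intro n
  induction n with
  | zero =>
    intro t ht htn
    obtain rfl : t = 0 := le_antisymm (by simpa using htn) ht
    simp [hx.apply_zero]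
  | succ n ih =>
    intro t ht htn
    have hdelay : ∀ s ∈ Ioc 0 t, |x (s - τ)| ≤ exp s := by
      intro s hs
      rcases le_total (s - τ) 0 with hsτ | hsτ
      · rw [hx.2.1 _ hsτ, abs_one]
        exact one_le_exp (x := s) hs.1.le
      · exact (ih _ hsτ (by push_cast at htn; linarith [hs.2])).trans (exp_le_exp.2 (by linarith))
    have hint : |∫ s in (0 : ℝ)..t, x (s - τ)| ≤ ∫ s in (0 : ℝ)..t, exp s :=
      intervalIntegral.norm_integral_le_of_norm_le ht
        (ae_of_all _ fun s hs => (Real.norm_eq_abs _).trans_le (hdelay s hs))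
        (continuous_exp.intervalIntegrable _ _)
    rw [integral_exp, exp_zero] at hint
    obtain ⟨h₁, h₂⟩ := abs_le.1 hint
    rw [hx.2.2 t ht, abs_le]
    constructor <;> linarith [exp_pos t]

lemma abs_le_exp_of_le (hx : IsXSol τ x) (hτ : 0 < τ) (hT : 0 ≤ T) (ht : t ≤ T) :
    |x t| ≤ exp T := by
  rw [← hx.apply_max_zero]
  exact (hx.abs_le_exp hτ (le_max_right _ _)).trans (exp_le_exp.2 (max_le ht hT))

lemma abs_sub_le_exp_mul (hx : IsXSol τ x) (hτ : 0 < τ) (hT : 0 ≤ T) (ha : a ≤ T) (hb : b ≤ T) :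
    |x a - x b| ≤ exp T * |a - b| := by
  rw [← hx.apply_max_zero a, ← hx.apply_max_zero b,
    hx.sub_eq_integral (le_max_right _ _) (le_max_right _ _)]
  refine (intervalIntegral.norm_integral_le_of_norm_le_const (C := exp T)
    (f := fun s => x (s - τ)) fun s hs => ?_).trans ?_
  · refine (Real.norm_eq_abs _).trans_le (hx.abs_le_exp_of_le hτ hT ?_)
    linarith [hs.2.trans (max_le (max_le ha hT) (max_le hb hT))]
  · rw [abs_sub_comm (max b 0)]
    exact mul_le_mul_of_nonneg_left (abs_max_sub_max_le_abs a b 0) (exp_pos T).le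

lemma pos_of_lt_firstRoot (hx : IsXSol τ x) (ht : t < firstRoot x) : 0 < x t := by
  rcases le_total t 0 with h0 | h0
  · rw [hx.2.1 t h0]
    exact one_pos
  · exact _root_.pos_of_lt_firstRoot hx.1 (hx.apply_zero ▸ one_pos) h0 ht

lemma min_le_firstRoot (hx : IsXSol τ x) (hex : ∃ t > 0, x t = 0) : min τ 1 ≤ firstRoot x :=
  le_firstRoot hex fun _ ht => (hx.apply_pos_of_lt_min ht.2).ne'

lemma apply_firstRoot (hx : IsXSol τ x) (hτ : 0 < τ) (hex : ∃ t > 0, x t = 0) :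
    x (firstRoot x) = 0 :=
  _root_.apply_firstRoot hx.1 hex (lt_min hτ one_pos) fun _ ht => (hx.apply_pos_of_lt_min ht.2).ne'

lemma firstRoot_pos (hx : IsXSol τ x) (hτ : 0 < τ) (hex : ∃ t > 0, x t = 0) : 0 < firstRoot x :=
  (lt_min hτ one_pos).trans_le (hx.min_le_firstRoot hex)

lemma strictAntiOn_Icc_firstRoot_add (hx : IsXSol τ x) :
    StrictAntiOn x (Icc 0 (firstRoot x + τ)) :=
  hx.strictAntiOn_Icc fun _ ht => hx.pos_of_lt_firstRoot (by linarith [ht.2])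

lemma antitoneOn_Iic_firstRoot_add (hx : IsXSol τ x) :
    AntitoneOn x (Iic (firstRoot x + τ)) :=
  hx.antitoneOn_Iic fun _ ht => (hx.pos_of_lt_firstRoot (by linarith [ht.2])).le

lemma neg_of_firstRoot_lt (hx : IsXSol τ x) (hτ : 0 < τ) (hex : ∃ t > 0, x t = 0)
    (h₁ : firstRoot x < t) (h₂ : t ≤ firstRoot x + τ) : x t < 0 := by
  rw [← hx.apply_firstRoot hτ hex]
  exact hx.strictAntiOn_Icc_firstRoot_add ⟨firstRoot_nonneg, by linarith⟩
    ⟨firstRoot_nonneg.trans h₁.le, h₂⟩ h₁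

lemma firstRoot_eq_one (hx : IsXSol τ x) (hτ : 1 ≤ τ) : firstRoot x = 1 := by
  have hroot : x 1 = 0 := by rw [hx.eq_one_sub zero_le_one hτ, sub_self]
  refine le_antisymm (firstRoot_le one_pos hroot) ?_
  simpa [min_eq_right hτ] using hx.min_le_firstRoot ⟨1, one_pos, hroot⟩

lemma lt_firstRoot (hx : IsXSol τ x) (hτ : 0 < τ) (hτ₁ : τ < 1) (hex : ∃ t > 0, x t = 0) :
    τ < firstRoot x := by
  refine (min_eq_left hτ₁.le ▸ hx.min_le_firstRoot hex).lt_of_ne fun h => ?_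
  have := hx.apply_firstRoot hτ hex
  rw [← h, hx.eq_one_sub hτ.le le_rfl] at this
  linarith

end IsXSol

lemma mul_exp_le_of_hasDerivAt {f f' : ℝ → ℝ} {a b c : ℝ} (hab : a ≤ b)
    (hf : ContinuousOn f (Icc a b)) (hf' : ∀ s ∈ Ioo a b, HasDerivAt f (f' s) s)
    (hle : ∀ s ∈ Ioo a b, f' s ≤ -(c * f s)) : f b * exp (c * (b - a)) ≤ f a := by
  have hanti : AntitoneOn (fun s => f s * exp (c * (s - a))) (Icc a b) := by
    refine antitoneOn_of_hasDerivWithinAt_nonpos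
      (f' := fun s => f' s * exp (c * (s - a)) + f s * (exp (c * (s - a)) * c)) (convex_Icc a b)
      (hf.mul (by fun_prop)) (fun s hs => ?_) fun s hs => ?_
    all_goals rw [interior_Icc] at hs
    · have hexp : HasDerivAt (fun s => exp (c * (s - a))) (exp (c * (s - a)) * c) s := by
        simpa using (((hasDerivAt_id s).sub_const a).const_mul c).exp
      exact ((hf' s hs).mul hexp).hasDerivWithinAt
    · have := hle s hs
      have := exp_pos (c * (s - a))
      nlinarith
  simpa using hanti ⟨le_rfl, hab⟩ ⟨hab, le_rfl⟩ hab

def expTower (τ : ℝ) : ℕ → ℝ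
  | 0 => 1
  | n + 1 => exp (τ * expTower τ n)

lemma pow_le_expTower {τ : ℝ} (hτ : 0 ≤ τ) : ∀ n, (exp 1 * τ) ^ n ≤ expTower τ n
  | 0 => by simp [expTower]
  | n + 1 => calc
      (exp 1 * τ) ^ (n + 1) = exp 1 * (τ * (exp 1 * τ) ^ n) := by ring
      _ ≤ exp 1 * (τ * expTower τ n) := by gcongr; exact pow_le_expTower hτ n
      _ ≤ expTower τ (n + 1) := exp_one_mul_le_exp

namespace IsXSol

variable {τ : ℝ} {x : ℝ → ℝ} {t : ℝ}

lemma antitone_of_forall_pos (hx : IsXSol τ x) (hpos : ∀ t, 0 < x t) : Antitone x :=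
  fun _ v huv => hx.antitoneOn_Iic (b := v) (fun _ _ => (hpos _).le) huv (mem_Iic.2 le_rfl) huv

lemma mul_le_of_forall_pos (hx : IsXSol τ x) (hpos : ∀ t, 0 < x t) {h : ℝ} (ht : 0 ≤ t)
    (hh : 0 ≤ h) : h * x (t + h - τ) ≤ x t := by
  have hint : ∫ _ in t..t + h, x (t + h - τ) ≤ ∫ s in t..t + h, x (s - τ) :=
    intervalIntegral.integral_mono_on (by linarith) intervalIntegrable_const
      (hx.continuous_delay.intervalIntegrable _ _) fun s hs =>
        hx.antitone_of_forall_pos hpos (by linarith [hs.2])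
  rw [intervalIntegral.integral_const, smul_eq_mul, add_sub_cancel_left,
    ← hx.sub_eq_integral ht (by linarith)] at hint
  linarith [hpos (t + h)]

lemma sq_mul_le_of_forall_pos (hx : IsXSol τ x) (hpos : ∀ t, 0 < x t) (hτ : 0 ≤ τ)
    (ht : τ / 2 ≤ t) : τ ^ 2 * x (t - τ) ≤ 4 * x t := by
  have h₁ := hx.mul_le_of_forall_pos hpos (t := t) (h := τ / 2) (by linarith) (by linarith)
  have h₂ := hx.mul_le_of_forall_pos hpos (t := t - τ / 2) (h := τ / 2) (by linarith) (by linarith)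
  rw [show t + τ / 2 - τ = t - τ / 2 by ring] at h₁
  rw [show t - τ / 2 + τ / 2 - τ = t - τ by ring] at h₂
  nlinarith

lemma expTower_mul_le_of_forall_pos (hx : IsXSol τ x) (hpos : ∀ t, 0 < x t) (hτ : 0 ≤ τ)
    (n : ℕ) : ∀ t, n * τ ≤ t → expTower τ n * x t ≤ x (t - τ) := by
  induction n with
  | zero =>
    intro t _
    simpa [expTower] using hx.antitone_of_forall_pos hpos (sub_le_self t hτ)
  | succ n ih =>
    intro t ht
    push_cast at ht
    have hdecay := mul_exp_le_of_hasDerivAt (c := expTower τ n) (sub_le_self t hτ)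
      hx.1.continuousOn (fun s hs => hx.hasDerivAt (by nlinarith [hs.1]))
      fun s hs => neg_le_neg (ih s (by linarith [hs.1]))
    rw [sub_sub_cancel, mul_comm (expTower τ n)] at hdecay
    simpa [expTower, mul_comm] using hdecay

lemma not_forall_pos (hx : IsXSol τ x) (hτ : 1 / exp 1 < τ) : ¬ ∀ t, 0 < x t := by
  intro hpos
  have hτ0 : 0 < τ := (by positivity : (0 : ℝ) < 1 / exp 1).trans hτ
  have heτ : 1 < exp 1 * τ := by rwa [div_lt_iff₀' (exp_pos 1)] at hτ
  obtain ⟨n, hn⟩ := pow_unbounded_of_one_lt (4 / τ ^ 2) heτ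
  have hn' : 4 < expTower τ n * τ ^ 2 :=
    (div_lt_iff₀ (by positivity)).1 (hn.trans_le (pow_le_expTower hτ0.le n))
  have hratio := hx.expTower_mul_le_of_forall_pos hpos hτ0.le n ((n + 1) * τ) (by nlinarith)
  have hquarter := hx.sq_mul_le_of_forall_pos hpos hτ0.le (t := (n + 1) * τ)
    (by nlinarith [(n.cast_nonneg : (0 : ℝ) ≤ n)])
  nlinarith [hpos ((n + 1) * τ)]

lemma exists_pos_root (hx : IsXSol τ x) (hτ : 1 / exp 1 < τ) : ∃ t > 0, x t = 0 := by
  by_contra! h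
  refine hx.not_forall_pos hτ fun t => ?_
  rcases le_total t 0 with ht | ht
  · rw [hx.2.1 t ht]
    exact one_pos
  · exact pos_of_forall_ne_zero hx.1 (hx.apply_zero ▸ one_pos) ht fun s hs => h s hs.1

end IsXSol

lemma integral_integral_swap_triangle {K : ℝ → ℝ → ℝ} (hK : Continuous (Function.uncurry K))
    {a b : ℝ} (hab : a ≤ b) :
    ∫ v in a..b, ∫ σ in a..v, K v σ = ∫ σ in a..b, ∫ v in σ..b, K v σ := by
  set G : ℝ → ℝ → ℝ := fun v σ => (Iic v).indicator (K v) σ with hG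
  have hint : Integrable (Function.uncurry G)
      ((volume.restrict (Ioc a b)).prod (volume.restrict (Ioc a b))) := by
    have hGK : Function.uncurry G = {p : ℝ × ℝ | p.2 ≤ p.1}.indicator (Function.uncurry K) := by
      ext ⟨v, σ⟩
      simp [hG, indicator_apply]
    rw [Measure.prod_restrict, hGK]
    refine Integrable.indicator ?_ (measurableSet_le measurable_snd measurable_fst)
    exact (hK.continuousOn.integrableOn_compact (isCompact_Icc.prod isCompact_Icc)).mono_set
      (prod_mono Ioc_subset_Icc_self Ioc_subset_Icc_self)
  have hleft : ∀ v ∈ Ioc a b, ∫ σ in a..v, K v σ = ∫ σ in Ioc a b, G v σ := by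
    intro v hv
    rw [hG, setIntegral_indicator measurableSet_Iic, Ioc_inter_Iic, min_eq_right hv.2,
      intervalIntegral.integral_of_le hv.1.le]
  have hright : ∀ σ ∈ Ioc a b, ∫ v in σ..b, K v σ = ∫ v in Ioc a b, G v σ := by
    intro σ hσ
    have hGσ : (fun v => G v σ) = (Ici σ).indicator fun v => K v σ := by
      ext v
      simp [hG, indicator_apply]
    have hset : Ioc a b ∩ Ici σ = Icc σ b := by
      ext v
      simp only [mem_inter_iff, mem_Ioc, mem_Ici, mem_Icc]
      constructor
      · rintro ⟨⟨-, hvb⟩, hσv⟩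
        exact ⟨hσv, hvb⟩
      · rintro ⟨hσv, hvb⟩
        exact ⟨⟨hσ.1.trans_le hσv, hvb⟩, hσv⟩
    rw [hGσ, setIntegral_indicator measurableSet_Ici, hset, integral_Icc_eq_integral_Ioc,
      intervalIntegral.integral_of_le hσ.2]
  rw [intervalIntegral.integral_of_le hab, intervalIntegral.integral_of_le hab,
    setIntegral_congr_fun measurableSet_Ioc hleft, setIntegral_congr_fun measurableSet_Ioc hright]
  exact integral_integral_swap hint

lemma eq_zero_of_eq_neg_integral_delay {w : ℝ → ℝ} {τ : ℝ} (hτ : 0 < τ)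
    (h0 : ∀ t ≤ 0, w t = 0) (heq : ∀ t ≥ 0, w t = -∫ s in (0 : ℝ)..t, w (s - τ)) (t : ℝ) :
    w t = 0 := by
  suffices h : ∀ n : ℕ, ∀ t, t ≤ n * τ → w t = 0 by
    obtain ⟨n, hn⟩ := exists_nat_ge (t / τ)
    exact h n t ((div_le_iff₀ hτ).1 hn)
  intro n
  induction n with
  | zero => simpa using h0
  | succ n ih =>
    intro t ht
    rcases le_total t 0 with ht0 | ht0
    · exact h0 t ht0
    rw [heq t ht0, intervalIntegral.integral_congr (g := fun _ => (0 : ℝ)),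
      intervalIntegral.integral_zero, neg_zero]
    intro s hs
    rw [uIcc_of_le ht0] at hs
    push_cast at ht
    exact ih _ (by linarith [hs.2])

def duhamel (x : ℝ → ℝ) (τ : ℝ) (B : ℝ → ℝ) (r : ℝ) : ℝ :=
  ∫ s in (0 : ℝ)..r, x (r - s - τ) * B s

section Duhamel

variable {x B : ℝ → ℝ} {τ r : ℝ}

lemma continuous_duhamel (hx : Continuous x) (hB : Continuous B) : Continuous (duhamel x τ B) :=
  intervalIntegral.continuous_parametric_intervalIntegral_of_continuous
    (f := fun r s => x (r - s - τ) * B s) (by fun_prop) continuous_id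

lemma duhamel_of_nonpos (hB0 : ∀ s ≤ 0, B s = 0) (hr : r ≤ 0) : duhamel x τ B r = 0 := by
  rw [duhamel, intervalIntegral.integral_congr (g := fun _ => (0 : ℝ)),
    intervalIntegral.integral_zero]
  intro s hs
  rw [uIcc_of_ge hr] at hs
  simp [hB0 s hs.2]

lemma IsXSol.integral_duhamel (hx : IsXSol τ x) (hB : Continuous B) {T : ℝ} (hT : 0 ≤ T) :
    ∫ v in (0 : ℝ)..T, duhamel x τ B v =
      (∫ σ in (0 : ℝ)..T, B σ) - ∫ σ in (0 : ℝ)..T, x (T - σ) * B σ := by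
  have hxc := hx.1
  have hc : Continuous fun σ => x (T - σ) * B σ := by fun_prop
  simp only [duhamel]
  rw [integral_integral_swap_triangle (K := fun v σ => x (v - σ - τ) * B σ) (by fun_prop) hT,
    ← intervalIntegral.integral_sub (hB.intervalIntegrable _ _) (hc.intervalIntegrable _ _)]
  refine intervalIntegral.integral_congr fun σ hσ => ?_
  rw [uIcc_of_le hT] at hσ
  rw [intervalIntegral.integral_mul_const,
    intervalIntegral.integral_comp_sub_right (fun v => x (v - τ)), sub_self,
    hx.2.2 (T - σ) (by linarith [hσ.2])]
  ring

lemma IsXSol.duhamel_eq (hx : IsXSol τ x) (hτ : 0 ≤ τ) (hB : Continuous B)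
    (hB0 : ∀ s ≤ 0, B s = 0) (hr : 0 ≤ r) :
    duhamel x τ B r = (∫ s in (0 : ℝ)..r, B s) - ∫ s in (0 : ℝ)..r, duhamel x τ B (s - τ) := by
  have hxc := hx.1
  rcases le_total r τ with hrτ | hτr
  · have hu : duhamel x τ B r = ∫ s in (0 : ℝ)..r, B s := by
      refine intervalIntegral.integral_congr fun s hs => ?_
      rw [uIcc_of_le hr] at hs
      simp only [hx.2.1 _ (by linarith [hs.1] : r - s - τ ≤ 0), one_mul]
    have hdelay : ∫ s in (0 : ℝ)..r, duhamel x τ B (s - τ) = 0 := by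
      rw [intervalIntegral.integral_congr (g := fun _ => (0 : ℝ)), intervalIntegral.integral_zero]
      intro s hs
      rw [uIcc_of_le hr] at hs
      exact duhamel_of_nonpos hB0 (by linarith [hs.2])
    rw [hu, hdelay, sub_zero]
  set T := r - τ with hT
  have hT0 : 0 ≤ T := by linarith
  have hu := continuous_duhamel (τ := τ) hxc hB
  have hshift : ∫ s in (0 : ℝ)..r, duhamel x τ B (s - τ) = ∫ v in (0 : ℝ)..T, duhamel x τ B v := by
    rw [intervalIntegral.integral_comp_sub_right (duhamel x τ B), zero_sub,
      ← intervalIntegral.integral_add_adjacent_intervals (hu.intervalIntegrable _ 0)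
        (hu.intervalIntegrable 0 _),
      intervalIntegral.integral_congr (a := -τ) (g := fun _ => (0 : ℝ)),
      intervalIntegral.integral_zero, zero_add]
    intro v hv
    rw [uIcc_of_le (by linarith)] at hv
    exact duhamel_of_nonpos hB0 hv.2
  have hswap := hx.integral_duhamel hB hT0
  have hsplit : duhamel x τ B r =
      (∫ σ in (0 : ℝ)..T, x (T - σ) * B σ) + ∫ σ in T..r, B σ := by
    rw [duhamel, ← intervalIntegral.integral_add_adjacent_intervals
      ((by fun_prop : Continuous fun σ => x (r - σ - τ) * B σ).intervalIntegrable 0 T)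
      ((by fun_prop : Continuous fun σ => x (r - σ - τ) * B σ).intervalIntegrable T r)]
    congr 1
    · refine intervalIntegral.integral_congr fun σ _ => ?_
      simp only [hT, sub_right_comm r]
    · refine intervalIntegral.integral_congr fun σ hσ => ?_
      rw [uIcc_of_le (by linarith)] at hσ
      simp only [hx.2.1 _ (by linarith [hσ.1] : r - σ - τ ≤ 0), one_mul]
  rw [hshift, hswap, hsplit, ← intervalIntegral.integral_add_adjacent_intervals
    (hB.intervalIntegrable 0 T) (hB.intervalIntegrable T r)]
  ring

end Duhamel

lemma IsXSol.sub_eq_duhamel {τ₁ τ₂ : ℝ} {x₁ x₂ : ℝ → ℝ} (hx₁ : IsXSol τ₁ x₁) (hx₂ : IsXSol τ₂ x₂)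
    (hτ₁ : 0 < τ₁) (hτ₂ : 0 ≤ τ₂) (t : ℝ) :
    x₁ t - x₂ t = duhamel x₁ τ₁ (fun s => x₂ (s - τ₂) - x₂ (s - τ₁)) t := by
  set B := fun s => x₂ (s - τ₂) - x₂ (s - τ₁) with hB
  have hBc : Continuous B := hx₂.continuous_delay.sub (hx₂.1.comp (continuous_sub_right τ₁))
  have hB0 : ∀ s ≤ 0, B s = 0 := fun s hs => by
    simp only [hB, hx₂.2.1 _ (by linarith : s - τ₂ ≤ 0), hx₂.2.1 _ (by linarith : s - τ₁ ≤ 0),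
      sub_self]
  have hu := continuous_duhamel (τ := τ₁) hx₁.1 hBc
  rw [← sub_eq_zero]
  refine eq_zero_of_eq_neg_integral_delay (w := fun t => x₁ t - x₂ t - duhamel x₁ τ₁ B t) hτ₁
    (fun t ht => ?_) (fun t ht => ?_) t
  · simp [hx₁.2.1 t ht, hx₂.2.1 t ht, duhamel_of_nonpos hB0 ht]
  · have hi₁ : IntervalIntegrable (fun s => x₁ (s - τ₁)) volume 0 t :=
      hx₁.continuous_delay.intervalIntegrable 0 t
    have hi₂ : IntervalIntegrable (fun s => x₂ (s - τ₁)) volume 0 t :=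
      (hx₂.1.comp (continuous_sub_right τ₁)).intervalIntegrable 0 t
    have hiu : IntervalIntegrable (fun s => duhamel x₁ τ₁ B (s - τ₁)) volume 0 t :=
      (hu.comp (continuous_sub_right τ₁)).intervalIntegrable 0 t
    have hiB : ∫ s in (0 : ℝ)..t, B s =
        (∫ s in (0 : ℝ)..t, x₂ (s - τ₂)) - ∫ s in (0 : ℝ)..t, x₂ (s - τ₁) :=
      intervalIntegral.integral_sub (hx₂.continuous_delay.intervalIntegrable 0 t) hi₂
    rw [hx₁.duhamel_eq hτ₁.le hBc hB0 ht, hx₁.2.2 t ht, hx₂.2.2 t ht, hiB,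
      intervalIntegral.integral_sub (hi₁.sub hi₂) hiu, intervalIntegral.integral_sub hi₁ hi₂]
    ring

lemma IsXSol.abs_sub_le {τ₁ τ₂ t : ℝ} {x₁ x₂ : ℝ → ℝ} (hx₁ : IsXSol τ₁ x₁) (hx₂ : IsXSol τ₂ x₂)
    (hτ₁ : 0 < τ₁) (hτ₂ : 0 < τ₂) (ht : 0 ≤ t) :
    |x₁ t - x₂ t| ≤ exp t * (exp t * |τ₁ - τ₂|) * t := by
  rw [hx₁.sub_eq_duhamel hx₂ hτ₁ hτ₂.le, duhamel]
  refine (intervalIntegral.norm_integral_le_of_norm_le_const (C := exp t * (exp t * |τ₁ - τ₂|))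
    (f := fun s => x₁ (t - s - τ₁) * (x₂ (s - τ₂) - x₂ (s - τ₁))) fun s hs => ?_).trans_eq
    (by rw [sub_zero, abs_of_nonneg ht])
  rw [uIoc_of_le ht] at hs
  rw [norm_mul, Real.norm_eq_abs, Real.norm_eq_abs]
  refine mul_le_mul (hx₁.abs_le_exp_of_le hτ₁ ht (by linarith [hs.1])) ?_ (abs_nonneg _)
    (exp_pos t).le
  have := hx₂.abs_sub_le_exp_mul hτ₂ ht (a := s - τ₂) (b := s - τ₁) (by linarith [hs.2])
    (by linarith [hs.2])
  rwa [sub_sub_sub_cancel_left] at this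

lemma tendstoUniformlyOn_Icc_of_isXSol {X : ℝ → ℝ → ℝ} {τ₀ : ℝ}
    (hX : ∀ᶠ τ in 𝓝 τ₀, IsXSol τ (X τ)) (hτ₀ : 0 < τ₀) (T : ℝ) :
    TendstoUniformlyOn X (X τ₀) (𝓝 τ₀) (Icc 0 T) := by
  rw [Metric.tendstoUniformlyOn_iff]
  intro ε hε
  have hsmall : Tendsto (fun τ => exp T * (exp T * |τ₀ - τ|) * T) (𝓝 τ₀) (𝓝 0) := by
    have hc : Continuous fun τ => exp T * (exp T * |τ₀ - τ|) * T := by fun_prop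
    simpa using hc.tendsto τ₀
  filter_upwards [hX, hsmall.eventually (eventually_lt_nhds hε), eventually_gt_nhds hτ₀]
    with τ hxτ hτε hτ t ht
  rw [Real.dist_eq]
  calc |X τ₀ t - X τ t| ≤ exp t * (exp t * |τ₀ - τ|) * t :=
        hX.self_of_nhds.abs_sub_le hxτ hτ₀ hτ ht.1
    _ ≤ exp T * (exp T * |τ₀ - τ|) * T := by gcongr <;> linarith [ht.1, ht.2]
    _ < ε := hτε

lemma continuousAt_firstRoot_of_tendstoUniformlyOn {F : ℝ → ℝ → ℝ} {τ₀ : ℝ}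
    (hF : ∀ᶠ τ in 𝓝 τ₀, Continuous (F τ))
    (hunif : ∀ T, TendstoUniformlyOn F (F τ₀) (𝓝 τ₀) (Icc 0 T))
    (h0 : 0 < F τ₀ 0) (hρ₀ : 0 < firstRoot (F τ₀))
    (hneg : ∀ ε > 0, ∃ t ∈ Ioo (firstRoot (F τ₀)) (firstRoot (F τ₀) + ε), F τ₀ t < 0) :
    ContinuousAt (fun τ => firstRoot (F τ)) τ₀ := by
  have hc₀ : Continuous (F τ₀) := hF.self_of_nhds
  set ρ₀ := firstRoot (F τ₀)
  rw [Metric.continuousAt_iff']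
  intro ε hε
  set δ := min (ε / 2) (ρ₀ / 2)
  have hδ : 0 < δ := lt_min (by linarith) (by linarith)
  have hδε : δ < ε := (min_le_left _ _).trans_lt (by linarith)
  have hδρ : δ < ρ₀ := (min_le_right _ _).trans_lt (by linarith)
  obtain ⟨t₁, ht₁, hneg₁⟩ := hneg δ hδ
  obtain ⟨z, hz, hzmin⟩ := isCompact_Icc.exists_isMinOn
    (nonempty_Icc.2 (by linarith : 0 ≤ ρ₀ - δ)) hc₀.continuousOn
  have hm : 0 < F τ₀ z := pos_of_lt_firstRoot hc₀ h0 hz.1 (by linarith [hz.2])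
  have hη : 0 < min (F τ₀ z) (-F τ₀ t₁) := lt_min hm (by linarith)
  filter_upwards [Metric.tendstoUniformlyOn_iff.1 (hunif t₁) _ hη, hF] with τ hclose hcτ
  have hposτ : ∀ t ∈ Icc 0 (ρ₀ - δ), 0 < F τ t := fun t ht => by
    have hd := hclose t ⟨ht.1, by linarith [ht.2, ht₁.1]⟩
    rw [Real.dist_eq] at hd
    linarith [(abs_lt.1 hd).2, isMinOn_iff.1 hzmin t ht, min_le_left (F τ₀ z) (-F τ₀ t₁)]
  have hnegτ : F τ t₁ < 0 := by
    have hd := hclose t₁ ⟨by linarith [ht₁.1], le_rfl⟩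
    rw [Real.dist_eq] at hd
    linarith [(abs_lt.1 hd).1, min_le_right (F τ₀ z) (-F τ₀ t₁)]
  obtain ⟨s, hs, hroot⟩ := intermediate_value_Ioo' (by linarith [ht₁.1]) hcτ.continuousOn
    ⟨hnegτ, hposτ 0 ⟨le_rfl, by linarith⟩⟩
  have hupper := firstRoot_le hs.1 hroot
  have hlower : ρ₀ - δ ≤ firstRoot (F τ) :=
    le_firstRoot ⟨s, hs.1, hroot⟩ fun t ht => (hposτ t ⟨ht.1.le, ht.2.le⟩).ne'
  rw [Real.dist_eq, abs_lt]
  constructor <;> linarith [hs.2, ht₁.2]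

lemma continuousAt_firstRoot_of_isXSol {X : ℝ → ℝ → ℝ} {τ₀ : ℝ}
    (hX : ∀ᶠ τ in 𝓝 τ₀, IsXSol τ (X τ)) (hτ₀ : 0 < τ₀) (hex : ∃ t > 0, X τ₀ t = 0) :
    ContinuousAt (fun τ => firstRoot (X τ)) τ₀ := by
  have hx₀ := hX.self_of_nhds
  refine continuousAt_firstRoot_of_tendstoUniformlyOn (hX.mono fun _ hx => hx.1)
    (tendstoUniformlyOn_Icc_of_isXSol hX hτ₀) (hx₀.apply_zero ▸ one_pos)
    (hx₀.firstRoot_pos hτ₀ hex) fun ε hε => ⟨firstRoot (X τ₀) + min ε τ₀ / 2, ?_, ?_⟩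
  · constructor <;> linarith [min_le_left ε τ₀, lt_min hε hτ₀]
  · exact hx₀.neg_of_firstRoot_lt hτ₀ hex (by linarith [lt_min hε hτ₀])
      (by linarith [min_le_right ε τ₀, lt_min hε hτ₀])

lemma IsXSol.firstRoot_lt_firstRoot {τ₁ τ₂ : ℝ} {x₁ x₂ : ℝ → ℝ} (hx₁ : IsXSol τ₁ x₁)
    (hx₂ : IsXSol τ₂ x₂) (hτ₁ : 0 < τ₁) (hτ₁₂ : τ₁ < τ₂) (hτ₁_lt_one : τ₁ < 1)
    (hex : ∃ t > 0, x₁ t = 0) : firstRoot x₂ < firstRoot x₁ := by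
  set ρ₁ := firstRoot x₁
  have hρ₁ : τ₁ < ρ₁ := hx₁.lt_firstRoot hτ₁ hτ₁_lt_one hex
  by_contra! hle
  have hc₁ := hx₁.1
  have hc₂ := hx₂.1
  set g := fun s => x₁ (ρ₁ - s - τ₁) * (x₂ (s - τ₂) - x₂ (s - τ₁))
  have hg : Continuous g := by fun_prop
  have hnonneg : ∀ s ∈ Icc 0 ρ₁, 0 ≤ g s := fun s hs =>
    mul_nonneg (hx₁.pos_of_lt_firstRoot (by linarith [hs.1])).le <| sub_nonneg.2 <|
      hx₂.antitoneOn_Iic_firstRoot_add (mem_Iic.2 (by linarith [hs.2, firstRoot_nonneg (f := x₂)]))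
        (mem_Iic.2 (by linarith [hs.2, firstRoot_nonneg (f := x₂)])) (by linarith)
  have hpos : ∀ s ∈ Ioo τ₁ (min ρ₁ τ₂), 0 < g s := by
    intro s ⟨hs₁, hs₂⟩
    have hρs := lt_min_iff.1 hs₂
    refine mul_pos (hx₁.pos_of_lt_firstRoot (by linarith)) (sub_pos.2 ?_)
    rw [hx₂.2.1 (s - τ₂) (by linarith), ← hx₂.apply_zero]
    exact hx₂.strictAntiOn_Icc_firstRoot_add ⟨le_rfl, by linarith [firstRoot_nonneg (f := x₂)]⟩
      ⟨by linarith, by linarith⟩ (by linarith)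
  have hint : 0 < ∫ s in (0 : ℝ)..ρ₁, g s :=
    (intervalIntegral.intervalIntegral_pos_of_pos_on (hg.intervalIntegrable _ _) hpos
      (lt_min hρ₁ hτ₁₂)).trans_le
    (intervalIntegral.integral_mono_interval hτ₁.le (lt_min hρ₁ hτ₁₂).le (min_le_left _ _)
      ((ae_restrict_iff' measurableSet_Ioc).2 (ae_of_all _ fun s hs =>
        hnonneg s (Ioc_subset_Icc_self hs)))
      (hg.intervalIntegrable _ _))
  have hvoc := hx₁.sub_eq_duhamel hx₂ hτ₁ (hτ₁.trans hτ₁₂).le ρ₁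
  rw [hx₁.apply_firstRoot hτ₁ hex, duhamel] at hvoc
  exact hle.not_gt (firstRoot_lt_of_neg hc₂ (hx₂.apply_zero ▸ one_pos) firstRoot_nonneg
    (by linarith))

theorem stmt0
    (X : ℝ → ℝ → ℝ) (hX : ∀ τ > 1 / Real.exp 1, IsXSol τ (X τ))
    (ϱ : ℝ → ℝ) (hϱ : ∀ τ, ϱ τ = firstRoot (X τ)) :
    (∀ τ > 1 / Real.exp 1,
      (∃ t > (0:ℝ), X τ t = 0) ∧
      X τ 0 = 1 ∧ X τ (ϱ τ) = 0 ∧ 0 < ϱ τ ∧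
      StrictAntiOn (X τ) (Icc 0 (ϱ τ))) ∧
    ContinuousOn ϱ (Ioi (1 / Real.exp 1)) ∧
    StrictAntiOn ϱ (Ioc (1 / Real.exp 1) 1) ∧
    (∀ τ ≥ (1:ℝ), ϱ τ = 1) := by
  have hpos : ∀ τ > 1 / exp 1, 0 < τ := fun τ hτ => (by positivity : (0 : ℝ) < 1 / exp 1).trans hτ
  have hroot : ∀ τ > 1 / exp 1, ∃ t > 0, X τ t = 0 := fun τ hτ => (hX τ hτ).exists_pos_root hτ
  obtain rfl : ϱ = fun τ => firstRoot (X τ) := funext hϱ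
  refine ⟨fun τ hτ => ?_, fun τ hτ => ?_, fun τ₁ h₁ τ₂ h₂ h₁₂ => ?_, fun τ hτ => ?_⟩
  · have hx := hX τ hτ
    exact ⟨hroot τ hτ, hx.apply_zero, hx.apply_firstRoot (hpos τ hτ) (hroot τ hτ),
      hx.firstRoot_pos (hpos τ hτ) (hroot τ hτ), hx.strictAntiOn_Icc_firstRoot_add.mono
        (Icc_subset_Icc_right (le_add_of_nonneg_right (hpos τ hτ).le))⟩
  · exact (continuousAt_firstRoot_of_isXSol (eventually_of_mem (Ioi_mem_nhds hτ) hX) (hpos τ hτ)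
      (hroot τ hτ)).continuousWithinAt
  · exact (hX τ₁ h₁.1).firstRoot_lt_firstRoot (hX τ₂ h₂.1) (hpos τ₁ h₁.1) h₁₂
      (h₁₂.trans_le h₂.2) (hroot τ₁ h₁.1)
  · have h1e : 1 / exp 1 < 1 := by
      rw [div_lt_one (exp_pos 1)]
      exact one_lt_exp_iff.2 one_pos
    exact (hX τ (h1e.trans_le hτ)).firstRoot_eq_one hτ
end
end

section
/- If 1/e < τ₁ < τ₂ ≤ 1, then ϱ(τ₁) > ϱ(τ₂), and x_{τ₁}(ϱ(τ₁) - t) < x_{τ₂}(ϱ(τ₂) - t) for every t ∈ (0, ϱ(τ₂)]. -/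
open Real MeasureTheory Filter Set

noncomputable section

namespace Stmt4Aux

lemma xsol_integral {τ : ℝ} {x : ℝ → ℝ} (hx : IsXSol τ x) {a b : ℝ}
    (ha : 0 ≤ a) (hb : 0 ≤ b) :
    x b - x a = - ∫ s in a..b, x (s - τ) := by
  have hc : Continuous fun s => x (s - τ) := hx.1.comp (continuous_id.sub continuous_const)
  have h1 := hx.2.2 a ha
  have h2 := hx.2.2 b hb
  have hadd : (∫ s in (0:ℝ)..a, x (s - τ)) + ∫ s in a..b, x (s - τ)
      = ∫ s in (0:ℝ)..b, x (s - τ) :=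
    intervalIntegral.integral_add_adjacent_intervals (hc.intervalIntegrable _ _)
      (hc.intervalIntegrable _ _)
  rw [h1, h2]; linarith

noncomputable def mseq (τ : ℝ) : ℕ → ℝ
  | 0 => 1
  | k+1 => Real.exp (τ * mseq τ k)

lemma mseq_pos (τ : ℝ) : ∀ k, 0 < mseq τ k := by
  intro k
  cases k with
  | zero => norm_num [mseq]
  | succ k => exact Real.exp_pos _

lemma mseq_ge {τ : ℝ} (hτ : 0 < τ) : ∀ k, (Real.exp 1 * τ)^k ≤ mseq τ k := by
  intro k
  induction k with
  | zero => simp [mseq]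
  | succ k ih =>
    have hm := mseq_pos τ k
    have h1 : τ * mseq τ k ≤ Real.exp (τ * mseq τ k - 1) := by
      have := Real.add_one_le_exp (τ * mseq τ k - 1); linarith
    have h2 : Real.exp 1 * (τ * mseq τ k) ≤ Real.exp (τ * mseq τ k) := by
      calc Real.exp 1 * (τ * mseq τ k) ≤ Real.exp 1 * Real.exp (τ * mseq τ k - 1) :=
            mul_le_mul_of_nonneg_left h1 (Real.exp_pos 1).le
        _ = Real.exp (τ * mseq τ k) := by rw [← Real.exp_add]; ring_nf
    calc (Real.exp 1 * τ)^(k+1) = (Real.exp 1 * τ) * (Real.exp 1 * τ)^k := by ring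
      _ ≤ (Real.exp 1 * τ) * mseq τ k := by
          apply mul_le_mul_of_nonneg_left ih (by positivity)
      _ = Real.exp 1 * (τ * mseq τ k) := by ring
      _ ≤ Real.exp (τ * mseq τ k) := h2
      _ = mseq τ (k+1) := rfl

lemma xsol_exists_root {τ : ℝ} {x : ℝ → ℝ} (hx : IsXSol τ x)
    (h1 : 1 / Real.exp 1 < τ) (h2 : τ ≤ 1) : ∃ t, 0 < t ∧ x t = 0 := by
  have epos : (0:ℝ) < Real.exp 1 := Real.exp_pos 1
  have τpos : 0 < τ := lt_trans (by positivity) h1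
  have hc : Continuous fun s => x (s - τ) := hx.1.comp (continuous_id.sub continuous_const)
  have h0 : x 0 = 1 := hx.2.1 0 le_rfl
  by_contra hcon
  push_neg at hcon
  have hpos : ∀ t, 0 < x t := by
    intro t
    rcases le_or_gt t 0 with h | h
    · rw [hx.2.1 t h]; norm_num
    · rcases lt_or_ge 0 (x t) with h' | h'
      · exact h'
      · exfalso
        have hmem : (0:ℝ) ∈ Icc (x t) (x 0) := ⟨h', by rw [h0]; norm_num⟩
        obtain ⟨c, hc1, hc2⟩ := intermediate_value_Icc' h.le hx.1.continuousOn hmem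
        have hc0 : 0 < c := by
          rcases hc1.1.eq_or_lt with h'' | h''
          · exfalso; rw [← h''] at hc2; rw [hc2] at h0; norm_num at h0
          · exact h''
        exact hcon c hc0 hc2
  have hmono : ∀ u v, u ≤ v → x v ≤ x u := by
    intro u v huv
    rcases le_or_gt v 0 with h | h
    · rw [hx.2.1 v h, hx.2.1 u (le_trans huv h)]
    · rcases le_or_gt u 0 with h' | h'
      · rw [hx.2.1 u h', hx.2.2 v h.le]
        have : 0 ≤ ∫ s in (0:ℝ)..v, x (s - τ) :=
          intervalIntegral.integral_nonneg h.le (fun s _ => (hpos _).le)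
        linarith
      · have hint := xsol_integral hx h'.le (le_trans h'.le huv)
        have : 0 ≤ ∫ s in u..v, x (s - τ) :=
          intervalIntegral.integral_nonneg huv (fun s _ => (hpos _).le)
        linarith
  have hderiv : ∀ t : ℝ, 0 < t → HasDerivAt x (-(x (t - τ))) t := by
    intro t ht
    have hG : HasDerivAt (fun u => (1:ℝ) - ∫ s in (0:ℝ)..u, x (s - τ)) (-(x (t - τ))) t := by
      have hF := intervalIntegral.integral_hasDerivAt_right (hc.intervalIntegrable 0 t)
        (hc.stronglyMeasurableAtFilter _ _) hc.continuousAt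
      exact hF.const_sub 1
    apply hG.congr_of_eventuallyEq
    filter_upwards [isOpen_Ioi.mem_nhds ht] with u hu
    exact hx.2.2 u (le_of_lt hu)
  -- step estimate
  have hA : ∀ a : ℝ, 0 ≤ a → τ/2 * x (a + τ/2 - τ) ≤ x a := by
    intro a ha
    have hint := xsol_integral hx ha (by linarith : (0:ℝ) ≤ a + τ/2)
    have hlow : (a + τ/2 - a) • x (a + τ/2 - τ) ≤ ∫ s in a..(a + τ/2), x (s - τ) := by
      rw [← intervalIntegral.integral_const]
      apply intervalIntegral.integral_mono_on (by linarith) intervalIntegrable_const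
        (hc.intervalIntegrable _ _)
      intro s hs
      exact hmono _ _ (by linarith [hs.2])
    rw [smul_eq_mul] at hlow
    have he : a + τ/2 - a = τ/2 := by ring
    rw [he] at hlow
    have := hpos (a + τ/2)
    linarith
  have hratio : ∀ t, τ ≤ t → (τ/2)*(τ/2) * x (t - τ) ≤ x t := by
    intro t ht
    have h1' := hA t (by linarith)
    have h2' := hA (t - τ/2) (by linarith)
    have e1 : t + τ/2 - τ = t - τ/2 := by ring
    have e2 : t - τ/2 + τ/2 - τ = t - τ := by ring
    rw [e1] at h1'
    rw [e2] at h2'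
    nlinarith [hpos (t - τ), hpos (t - τ/2), τpos]
  have grow : ∀ k : ℕ, ∀ t : ℝ, (k:ℝ) * (τ + 1) ≤ t → mseq τ k * x t ≤ x (t - τ) := by
    intro k
    induction k with
    | zero =>
      intro t _
      simpa [mseq] using hmono (t - τ) t (by linarith)
    | succ k ih =>
      intro t ht
      set μ := mseq τ k with hμ
      have hμpos : 0 < μ := mseq_pos τ k
      set K := (k:ℝ) * (τ + 1) with hK
      have hK0 : (0:ℝ) ≤ K := by positivity
      have hg : ∀ u : ℝ, 0 < u →
          HasDerivAt (fun u => Real.exp (μ * u) * x u)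
            (Real.exp (μ * u) * μ * x u + Real.exp (μ * u) * (-(x (u - τ)))) u := by
        intro u hu
        have hexp : HasDerivAt (fun u : ℝ => Real.exp (μ * u)) (Real.exp (μ * u) * μ) u := by
          have hlin : HasDerivAt (fun u : ℝ => μ * u) μ u := by
            simpa using (hasDerivAt_id u).const_mul μ
          exact hlin.exp
        exact hexp.mul (hderiv u hu)
      have hanti : AntitoneOn (fun u => Real.exp (μ * u) * x u) (Ici K) := by
        apply antitoneOn_of_deriv_nonpos (convex_Ici K)
        · exact ((Real.continuous_exp.comp (continuous_const.mul continuous_id)).mul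
            hx.1).continuousOn
        · intro u hu
          rw [interior_Ici] at hu
          exact (hg u (lt_of_le_of_lt hK0 hu)).differentiableAt.differentiableWithinAt
        · intro u hu
          rw [interior_Ici] at hu
          have hd := hg u (lt_of_le_of_lt hK0 hu)
          rw [hd.deriv]
          have hih := ih u hu.le
          have hE := Real.exp_pos (μ * u)
          nlinarith [hih, hE]
      have hmem1 : t - τ ∈ Ici K := by
        simp only [mem_Ici]
        push_cast at ht
        linarith
      have hmem2 : t ∈ Ici K := by
        simp only [mem_Ici]
        push_cast at ht
        linarith
      have hgle := hanti hmem1 hmem2 (by linarith)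
      simp only at hgle
      have hexp2 : Real.exp (μ * t) = Real.exp (μ * (t - τ)) * Real.exp (μ * τ) := by
        rw [← Real.exp_add]; ring_nf
      rw [hexp2] at hgle
      have hEpos := Real.exp_pos (μ * (t - τ))
      have hkey : Real.exp (μ * τ) * x t ≤ x (t - τ) := by
        rw [mul_assoc] at hgle
        exact le_of_mul_le_mul_left hgle hEpos
      have : mseq τ (k+1) = Real.exp (μ * τ) := by rw [show mseq τ (k+1) = Real.exp (τ * μ) from rfl, mul_comm]
      rw [this]
      exact hkey
  -- contradiction
  have hβ : (0:ℝ) < (τ/2)*(τ/2) := by positivity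
  have he1 : 1 < Real.exp 1 * τ := by
    rw [div_lt_iff₀ epos] at h1
    nlinarith
  obtain ⟨k, hk⟩ := pow_unbounded_of_one_lt (1/((τ/2)*(τ/2))) he1
  have hk0 : (0:ℝ) ≤ (k:ℝ) * (τ + 1) := by positivity
  set t := (k:ℝ)*(τ+1) + τ with hT
  have h3 := grow k t (by linarith)
  have h4 := hratio t (by linarith)
  have h5 : (Real.exp 1 * τ)^k ≤ mseq τ k := mseq_ge τpos k
  have h6 := hpos t
  have h7 := hpos (t - τ)
  have hβm : (τ/2)*(τ/2) * mseq τ k ≤ 1 := by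
    nlinarith [mul_le_mul_of_nonneg_left h3 hβ.le]
  have hgt : 1 < (τ/2)*(τ/2) * mseq τ k := by
    rw [div_lt_iff₀ hβ] at hk
    nlinarith
  linarith

structure XFacts (τ : ℝ) (x : ℝ → ℝ) (ρ : ℝ) : Prop where
  one_le : 1 ≤ ρ
  root : x ρ = 0
  pos : ∀ t, t < ρ → 0 < x t
  le_one : ∀ t, t ≤ ρ → x t ≤ 1
  nonneg : ∀ t, t ≤ ρ → 0 ≤ x t
  mono : ∀ u v, u ≤ v → v ≤ ρ → x v ≤ x u
  strict : ∀ u v, 0 ≤ u → u < v → v ≤ ρ → x v < x u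

lemma xfacts {τ : ℝ} {x : ℝ → ℝ} (hx : IsXSol τ x) (h1 : 1 / Real.exp 1 < τ) (h2 : τ ≤ 1) :
    XFacts τ x (firstRoot x) := by
  have τpos : 0 < τ := lt_trans (by positivity) h1
  have hc : Continuous fun s => x (s - τ) := hx.1.comp (continuous_id.sub continuous_const)
  have h0 : x 0 = 1 := hx.2.1 0 le_rfl
  have hlin : ∀ t, 0 ≤ t → t ≤ τ → x t = 1 - t := by
    intro t ht0 htτ
    rw [hx.2.2 t ht0]
    have hcong : ∫ s in (0:ℝ)..t, x (s - τ) = ∫ s in (0:ℝ)..t, (1:ℝ) := by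
      apply intervalIntegral.integral_congr
      intro s hs
      rw [uIcc_of_le ht0] at hs
      exact hx.2.1 _ (by linarith [hs.1, hs.2] : s - τ ≤ 0)
    rw [hcong]
    simp
  obtain ⟨r, hr0, hrx⟩ := xsol_exists_root hx h1 h2
  set S := {t : ℝ | 0 < t ∧ x t = 0} with hS
  have hSne : S.Nonempty := ⟨r, hr0, hrx⟩
  have hSlb : ∀ t ∈ S, τ ≤ t := by
    rintro t ⟨ht0, htx⟩
    by_contra hlt
    push_neg at hlt
    have := hlin t ht0.le hlt.le
    rw [htx] at this
    linarith
  have hSbdd : BddBelow S := ⟨0, fun t ht => (ht.1).le⟩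
  have hSeq : S = Ici (τ/2) ∩ x ⁻¹' {0} := by
    ext t
    constructor
    · rintro ⟨ht0, htx⟩
      exact ⟨by simp only [mem_Ici]; linarith [hSlb t ⟨ht0, htx⟩], htx⟩
    · rintro ⟨ht1, ht2⟩
      simp only [mem_Ici] at ht1
      exact ⟨by linarith, ht2⟩
  have hSclosed : IsClosed S := by
    rw [hSeq]
    exact isClosed_Ici.inter (isClosed_singleton.preimage hx.1)
  have hρS : firstRoot x ∈ S := by
    rw [firstRoot]
    exact hSclosed.csInf_mem hSne hSbdd
  set ρ := firstRoot x with hρdef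
  have hρτ : τ ≤ ρ := hSlb _ hρS
  have hρle : ∀ t ∈ S, ρ ≤ t := fun t ht => csInf_le hSbdd ht
  have hroot : x ρ = 0 := hρS.2
  have hpos : ∀ t, t < ρ → 0 < x t := by
    intro t ht
    rcases le_or_gt t 0 with h | h
    · rw [hx.2.1 t h]; norm_num
    · rcases lt_or_ge 0 (x t) with h' | h'
      · exact h'
      · exfalso
        have hmem : (0:ℝ) ∈ Icc (x t) (x 0) := ⟨h', by rw [h0]; norm_num⟩
        obtain ⟨c, hc1, hc2⟩ := intermediate_value_Icc' h.le hx.1.continuousOn hmem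
        have hc0 : 0 < c := by
          rcases hc1.1.eq_or_lt with h'' | h''
          · exfalso; rw [← h''] at hc2; rw [hc2] at h0; norm_num at h0
          · exact h''
        exact absurd (hρle c ⟨hc0, hc2⟩) (by linarith [hc1.2])
  have hnonneg : ∀ t, t ≤ ρ → 0 ≤ x t := by
    intro t ht
    rcases eq_or_lt_of_le ht with h | h
    · rw [h, hroot]
    · exact (hpos t h).le
  have hmono : ∀ u v, u ≤ v → v ≤ ρ → x v ≤ x u := by
    intro u v huv hv
    rcases le_or_gt v 0 with h | h
    · rw [hx.2.1 v h, hx.2.1 u (le_trans huv h)]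
    · rcases le_or_gt u 0 with h' | h'
      · rw [hx.2.1 u h', hx.2.2 v h.le]
        have : 0 ≤ ∫ s in (0:ℝ)..v, x (s - τ) := by
          apply intervalIntegral.integral_nonneg h.le
          intro s hs
          exact hnonneg _ (by linarith [hs.2])
        linarith
      · have hint := xsol_integral hx h'.le (le_trans h'.le huv)
        have : 0 ≤ ∫ s in u..v, x (s - τ) := by
          apply intervalIntegral.integral_nonneg huv
          intro s hs
          exact hnonneg _ (by linarith [hs.2])
        linarith
  have hle1 : ∀ t, t ≤ ρ → x t ≤ 1 := by
    intro t ht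
    rcases le_or_gt t 0 with h | h
    · rw [hx.2.1 t h]
    · calc x t ≤ x 0 := hmono 0 t h.le ht
        _ = 1 := h0
  have hstrict : ∀ u v, 0 ≤ u → u < v → v ≤ ρ → x v < x u := by
    intro u v hu huv hv
    have hint := xsol_integral hx hu (le_trans hu huv.le)
    have hpos' : 0 < ∫ s in u..v, x (s - τ) := by
      apply intervalIntegral.intervalIntegral_pos_of_pos_on (hc.intervalIntegrable _ _) _ huv
      intro s hs
      exact hpos _ (by linarith [hs.2])
    linarith
  have hone : 1 ≤ ρ := by
    have hid := hx.2.2 ρ (by linarith : (0:ℝ) ≤ ρ)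
    have hb : ∫ s in (0:ℝ)..ρ, x (s - τ) ≤ ∫ s in (0:ℝ)..ρ, (1:ℝ) := by
      apply intervalIntegral.integral_mono_on (by linarith) (hc.intervalIntegrable _ _)
        intervalIntegrable_const
      intro s hs
      exact hle1 _ (by linarith [hs.2])
    rw [intervalIntegral.integral_const, smul_eq_mul, mul_one, sub_zero] at hb
    rw [hroot] at hid
    linarith
  exact ⟨hone, hroot, hpos, hle1, hnonneg, hmono, hstrict⟩


lemma y_ident {τ ρ : ℝ} {x : ℝ → ℝ} (hx : IsXSol τ x) (F : XFacts τ x ρ)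
    {t : ℝ} (ht0 : 0 ≤ t) (htρ : t ≤ ρ) :
    x (ρ - t) = ∫ s in (0:ℝ)..t, x (ρ - (s + τ)) := by
  have hρ0 : (0:ℝ) ≤ ρ := by linarith [F.one_le]
  have hint := xsol_integral hx (by linarith : (0:ℝ) ≤ ρ - t) hρ0
  rw [F.root] at hint
  have hcomp : ∫ s in (0:ℝ)..t, x (ρ - (s + τ)) = ∫ s in (ρ - t)..ρ, x (s - τ) := by
    have hcs := intervalIntegral.integral_comp_sub_left (a := 0) (b := t)
      (fun s => x (s - τ)) ρ
    simp only [sub_zero] at hcs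
    rw [← hcs]
    apply intervalIntegral.integral_congr
    intro s _
    congr 1
    ring
  rw [hcomp]
  linarith

lemma y_sub {τ ρ : ℝ} {x : ℝ → ℝ} (hx : IsXSol τ x) (F : XFacts τ x ρ) (τpos : 0 < τ)
    {t : ℝ} (ht0 : 0 ≤ t) :
    x (ρ - t) ≤ ∫ s in (0:ℝ)..t, x (ρ - (s + τ)) := by
  have hρ0 : (0:ℝ) ≤ ρ := by linarith [F.one_le]
  have hyc : Continuous fun s => x (ρ - (s + τ)) :=
    hx.1.comp (continuous_const.sub (continuous_id.add continuous_const))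
  rcases le_or_gt t ρ with h | h
  · exact (y_ident hx F ht0 h).le
  · have hy1 : x (ρ - t) ≤ 1 := by
      rw [hx.2.1 _ (by linarith : ρ - t ≤ 0)]
    have hρeq := y_ident hx F hρ0 le_rfl
    rw [sub_self] at hρeq
    have hone : ∫ s in (0:ℝ)..ρ, x (ρ - (s + τ)) = 1 := by
      rw [← hρeq]
      exact hx.2.1 0 le_rfl
    have hsplit : (∫ s in (0:ℝ)..ρ, x (ρ - (s + τ))) + ∫ s in ρ..t, x (ρ - (s + τ))
        = ∫ s in (0:ℝ)..t, x (ρ - (s + τ)) :=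
      intervalIntegral.integral_add_adjacent_intervals (hyc.intervalIntegrable _ _)
        (hyc.intervalIntegrable _ _)
    have hnn : 0 ≤ ∫ s in ρ..t, x (ρ - (s + τ)) := by
      apply intervalIntegral.integral_nonneg h.le
      intro s hs
      exact F.nonneg _ (by linarith [hs.1, τpos])
    linarith

lemma y_lip {τ ρ : ℝ} {x : ℝ → ℝ} (hx : IsXSol τ x) (F : XFacts τ x ρ) (τpos : 0 < τ)
    {a b : ℝ} (ha : 0 ≤ a) (hab : a ≤ b) (hb : b ≤ ρ) :
    x (ρ - b) - x (ρ - a) ≤ b - a := by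
  have hc : Continuous fun s => x (s - τ) := hx.1.comp (continuous_id.sub continuous_const)
  have hint := xsol_integral hx (show (0:ℝ) ≤ ρ - b by linarith)
    (show (0:ℝ) ≤ ρ - a by linarith [F.one_le])
  have hbnd : ∫ s in (ρ-b)..(ρ-a), x (s - τ) ≤ ∫ s in (ρ-b)..(ρ-a), (1:ℝ) := by
    apply intervalIntegral.integral_mono_on (by linarith) (hc.intervalIntegrable _ _)
      intervalIntegrable_const
    intro s hs
    exact F.le_one _ (by linarith [hs.2, τpos])
  rw [intervalIntegral.integral_const, smul_eq_mul, mul_one] at hbnd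
  have : (ρ - a) - (ρ - b) = b - a := by ring
  rw [this] at hbnd
  linarith

lemma shift_step (τ₁ τ₂ ρ₂ : ℝ) (y₁ y₂ : ℝ → ℝ)
    (hτ₁ : 0 ≤ τ₁) (hτ : τ₁ ≤ τ₂)
    (hy₁c : Continuous y₁) (hy₂c : Continuous y₂)
    (h₁sub : ∀ t, 0 ≤ t → y₁ t ≤ ∫ s in (0:ℝ)..t, y₁ (s + τ₁))
    (h₁le1 : ∀ t, 0 ≤ t → y₁ t ≤ 1)
    (h₂mono : ∀ a b, 0 ≤ a → a ≤ b → y₂ a ≤ y₂ b)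
    (h₂nonneg : ∀ t, 0 ≤ t → 0 ≤ y₂ t)
    (h₂le1 : ∀ t, 0 ≤ t → y₂ t ≤ 1)
    (h₂one : ∀ t, ρ₂ ≤ t → y₂ t = 1)
    (h₂ident : ∀ t, 0 ≤ t → t ≤ ρ₂ → y₂ t = ∫ s in (0:ℝ)..t, y₂ (s + τ₂))
    (h₂lip : ∀ a b, 0 ≤ a → a ≤ b → b ≤ ρ₂ → y₂ b - y₂ a ≤ b - a)
    (θ : ℝ) (hθ0 : 0 ≤ θ) (hθρ : θ ≤ ρ₂)
    (hP : ∀ t, 0 ≤ t → y₁ t ≤ y₂ (t + θ)) :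
    ∀ t, 0 ≤ t → y₁ t ≤ y₂ (t + max (θ - y₂ θ) 0) := by
  have hy₂i : Continuous fun s => y₂ (s + (θ + τ₂)) :=
    hy₂c.comp (continuous_id.add continuous_const)
  have hy₂i' : Continuous fun s => y₂ (s + τ₂) :=
    hy₂c.comp (continuous_id.add continuous_const)
  have hy₁i : Continuous fun s => y₁ (s + τ₁) :=
    hy₁c.comp (continuous_id.add continuous_const)
  set c := y₂ θ with hcdef
  set θ' := max (θ - c) 0 with hθ'def
  have hc0 : 0 ≤ c := h₂nonneg θ hθ0
  have hθ'0 : 0 ≤ θ' := le_max_right _ _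
  have hθ'θ : θ' ≤ θ := max_le (by linarith) hθ0
  have hθθ' : θ - c ≤ θ' := le_max_left _ _
  intro t ht
  by_cases hcap : ρ₂ ≤ t + θ'
  · rw [h₂one _ hcap]
    exact h₁le1 t ht
  push_neg at hcap
  have hint1 : y₁ t ≤ ∫ s in (0:ℝ)..t, y₂ (s + (θ + τ₂)) := by
    refine le_trans (h₁sub t ht) ?_
    apply intervalIntegral.integral_mono_on ht (hy₁i.intervalIntegrable _ _)
      (hy₂i.intervalIntegrable _ _)
    intro s hs
    calc y₁ (s + τ₁) ≤ y₂ ((s + τ₁) + θ) := hP _ (by linarith [hs.1])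
      _ ≤ y₂ (s + (θ + τ₂)) := h₂mono _ _ (by linarith [hs.1]) (by linarith)
  have keyeval : ∀ r, 0 ≤ r → r + θ ≤ ρ₂ →
      ∫ s in (0:ℝ)..r, y₂ (s + (θ + τ₂)) = y₂ (r + θ) - c := by
    intro r hr hrθ
    have e1 : ∫ s in (0:ℝ)..r, y₂ (s + (θ + τ₂)) = ∫ s in θ..(r + θ), y₂ (s + τ₂) := by
      have hca := intervalIntegral.integral_comp_add_right (a := 0) (b := r)
        (fun s => y₂ (s + τ₂)) θ
      rw [zero_add] at hca
      rw [← hca]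
      apply intervalIntegral.integral_congr
      intro s _
      congr 1
      ring
    have e2 : (∫ s in (0:ℝ)..θ, y₂ (s + τ₂)) + ∫ s in θ..(r+θ), y₂ (s + τ₂)
        = ∫ s in (0:ℝ)..(r+θ), y₂ (s + τ₂) :=
      intervalIntegral.integral_add_adjacent_intervals (hy₂i'.intervalIntegrable _ _)
        (hy₂i'.intervalIntegrable _ _)
    have i1 := h₂ident θ hθ0 hθρ
    have i2 := h₂ident (r + θ) (by linarith) hrθ
    rw [e1]
    linarith
  by_cases hB : t + θ ≤ ρ₂
  · have h3 := keyeval t ht hB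
    have h4 := h₂lip (t + θ') (t + θ) (by linarith) (by linarith) hB
    rw [h3] at hint1
    linarith
  · push_neg at hB
    set t₀ := ρ₂ - θ with ht₀def
    have ht₀0 : 0 ≤ t₀ := by linarith
    have ht₀t : t₀ ≤ t := by linarith
    have hsplit : (∫ s in (0:ℝ)..t₀, y₂ (s + (θ+τ₂))) + ∫ s in t₀..t, y₂ (s + (θ+τ₂))
        = ∫ s in (0:ℝ)..t, y₂ (s + (θ+τ₂)) :=
      intervalIntegral.integral_add_adjacent_intervals (hy₂i.intervalIntegrable _ _)
        (hy₂i.intervalIntegrable _ _)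
    have h5 := keyeval t₀ ht₀0 (by linarith)
    have h6 : ∫ s in t₀..t, y₂ (s + (θ+τ₂)) ≤ ∫ s in t₀..t, (1:ℝ) := by
      apply intervalIntegral.integral_mono_on ht₀t (hy₂i.intervalIntegrable _ _)
        intervalIntegrable_const
      intro s hs
      exact h₂le1 _ (by linarith [hs.1])
    rw [intervalIntegral.integral_const, smul_eq_mul, mul_one] at h6
    have h7 : y₂ (t₀ + θ) = 1 := h₂one _ (by linarith)
    have h8 := h₂lip (t + θ') ρ₂ (by linarith) (by linarith) le_rfl
    have h9 : y₂ ρ₂ = 1 := h₂one _ le_rfl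
    linarith

end Stmt4Aux

theorem stmt4 (τ₁ τ₂ : ℝ) (h1 : 1 / Real.exp 1 < τ₁) (h12 : τ₁ < τ₂) (h2 : τ₂ ≤ 1)
    (x₁ x₂ : ℝ → ℝ) (hx₁ : IsXSol τ₁ x₁) (hx₂ : IsXSol τ₂ x₂)
    (ρ₁ ρ₂ : ℝ) (hρ₁ : ρ₁ = firstRoot x₁) (hρ₂ : ρ₂ = firstRoot x₂) :
    ρ₂ < ρ₁ ∧ ∀ t ∈ Ioc (0:ℝ) ρ₂, x₁ (ρ₁ - t) < x₂ (ρ₂ - t) := by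
  have epos : (0:ℝ) < Real.exp 1 := Real.exp_pos 1
  have τ₁pos : 0 < τ₁ := lt_trans (by positivity) h1
  have τ₂pos : 0 < τ₂ := lt_trans τ₁pos h12
  have h1' : 1 / Real.exp 1 < τ₂ := lt_trans h1 h12
  have h2' : τ₁ ≤ 1 := le_of_lt (lt_of_lt_of_le h12 h2)
  have F₁ : Stmt4Aux.XFacts τ₁ x₁ ρ₁ := by
    rw [hρ₁]; exact Stmt4Aux.xfacts hx₁ h1 h2'
  have F₂ : Stmt4Aux.XFacts τ₂ x₂ ρ₂ := by
    rw [hρ₂]; exact Stmt4Aux.xfacts hx₂ h1' h2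
  have hρ₁1 := F₁.one_le
  have hρ₂1 := F₂.one_le
  set y₁ : ℝ → ℝ := fun t => x₁ (ρ₁ - t) with hy₁def
  set y₂ : ℝ → ℝ := fun t => x₂ (ρ₂ - t) with hy₂def
  have hy₁c : Continuous y₁ := hx₁.1.comp (continuous_const.sub continuous_id)
  have hy₂c : Continuous y₂ := hx₂.1.comp (continuous_const.sub continuous_id)
  have h₂one : ∀ t, ρ₂ ≤ t → y₂ t = 1 := by
    intro t ht
    simp only [hy₂def]
    exact hx₂.2.1 _ (by linarith)
  have h₂nonneg : ∀ t, 0 ≤ t → 0 ≤ y₂ t := by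
    intro t ht
    simp only [hy₂def]
    exact F₂.nonneg _ (by linarith)
  have h₂le1 : ∀ t, 0 ≤ t → y₂ t ≤ 1 := by
    intro t ht
    simp only [hy₂def]
    exact F₂.le_one _ (by linarith)
  have h₂mono : ∀ a b, 0 ≤ a → a ≤ b → y₂ a ≤ y₂ b := by
    intro a b ha hab
    simp only [hy₂def]
    exact F₂.mono _ _ (by linarith) (by linarith)
  have h₂strict : ∀ a b, 0 ≤ a → a < b → a < ρ₂ → y₂ a < y₂ b := by
    intro a b ha hab haρ
    rcases le_or_gt b ρ₂ with h | h
    · simp only [hy₂def]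
      exact F₂.strict _ _ (by linarith) (by linarith) (by linarith)
    · have h01 : x₂ 0 = 1 := hx₂.2.1 0 le_rfl
      have hlt := F₂.strict 0 (ρ₂ - a) le_rfl (by linarith) (by linarith)
      rw [h₂one b h.le]
      simp only [hy₂def]
      rw [h01] at hlt
      exact hlt
  have h₂ident : ∀ t, 0 ≤ t → t ≤ ρ₂ → y₂ t = ∫ s in (0:ℝ)..t, y₂ (s + τ₂) := by
    intro t ht ht'
    simp only [hy₂def]
    exact Stmt4Aux.y_ident hx₂ F₂ ht ht'
  have h₂lip : ∀ a b, 0 ≤ a → a ≤ b → b ≤ ρ₂ → y₂ b - y₂ a ≤ b - a := by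
    intro a b ha hab hb
    simp only [hy₂def]
    exact Stmt4Aux.y_lip hx₂ F₂ τ₂pos ha hab hb
  have h₁sub : ∀ t, 0 ≤ t → y₁ t ≤ ∫ s in (0:ℝ)..t, y₁ (s + τ₁) := by
    intro t ht
    simp only [hy₁def]
    exact Stmt4Aux.y_sub hx₁ F₁ τ₁pos ht
  have h₁le1 : ∀ t, 0 ≤ t → y₁ t ≤ 1 := by
    intro t ht
    simp only [hy₁def]
    exact F₁.le_one _ (by linarith)
  -- the infimum argument
  set A := {θ : ℝ | θ ∈ Icc 0 ρ₂ ∧ ∀ t, 0 ≤ t → y₁ t ≤ y₂ (t + θ)} with hAdef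
  have hAρ₂ : ρ₂ ∈ A := by
    refine ⟨⟨by linarith, le_rfl⟩, fun t ht => ?_⟩
    rw [h₂one _ (by linarith)]
    exact h₁le1 t ht
  have hAbdd : BddBelow A := ⟨0, fun θ hθ => hθ.1.1⟩
  have hAclosed : IsClosed A := by
    have hrw : A = Icc 0 ρ₂ ∩ ⋂ (t : ℝ) (_ : 0 ≤ t), {θ | y₁ t ≤ y₂ (t + θ)} := by
      ext θ
      simp only [hAdef, mem_setOf_eq, mem_inter_iff, mem_iInter]
    rw [hrw]
    exact isClosed_Icc.inter (isClosed_iInter fun t => isClosed_iInter fun ht =>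
      isClosed_le continuous_const (hy₂c.comp (continuous_const.add continuous_id)))
  set θs := sInf A with hθsdef
  have hθsA : θs ∈ A := hAclosed.csInf_mem ⟨ρ₂, hAρ₂⟩ hAbdd
  have h₂zero : y₂ 0 = 0 := by
    simp only [hy₂def]
    rw [sub_zero]
    exact F₂.root
  have hθs0 : θs = 0 := by
    by_contra hne
    have hθspos : 0 < θs := lt_of_le_of_ne hθsA.1.1 (Ne.symm hne)
    have hcpos : 0 < y₂ θs := by
      have := h₂strict 0 θs le_rfl hθspos (by linarith)
      linarith [h₂zero]
    have hstep := Stmt4Aux.shift_step τ₁ τ₂ ρ₂ y₁ y₂ τ₁pos.le h12.le hy₁c hy₂c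
      h₁sub h₁le1 h₂mono h₂nonneg h₂le1 h₂one h₂ident h₂lip θs hθsA.1.1 hθsA.1.2 hθsA.2
    set θ' := max (θs - y₂ θs) 0 with hθ'def
    have hθ'A : θ' ∈ A := by
      refine ⟨⟨le_max_right _ _, ?_⟩, hstep⟩
      apply max_le (by linarith [hθsA.1.2]) (by linarith [hθsA.1.2])
    have hle' : θs ≤ θ' := csInf_le hAbdd hθ'A
    have hlt' : θ' < θs := max_lt (by linarith) hθspos
    linarith
  have hle : ∀ t, 0 ≤ t → y₁ t ≤ y₂ t := by
    intro t ht
    have := hθsA.2 t ht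
    rwa [hθs0, add_zero] at this
  -- strict comparison on (0, min ρ₁ ρ₂]
  have hstrict : ∀ t, 0 < t → t ≤ min ρ₁ ρ₂ → y₁ t < y₂ t := by
    intro t ht0 htm
    have htρ₁ : t ≤ ρ₁ := le_trans htm (min_le_left _ _)
    have htρ₂ : t ≤ ρ₂ := le_trans htm (min_le_right _ _)
    have i₁ : y₁ t = ∫ s in (0:ℝ)..t, y₁ (s + τ₁) := by
      simp only [hy₁def]
      exact Stmt4Aux.y_ident hx₁ F₁ ht0.le htρ₁
    have i₂ : y₂ t = ∫ s in (0:ℝ)..t, y₂ (s + τ₂) := h₂ident t ht0.le htρ₂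
    set H : ℝ → ℝ := fun s => y₂ (s + τ₂) - y₁ (s + τ₁) with hHdef
    have hHc : Continuous H := (hy₂c.comp (continuous_id.add continuous_const)).sub
      (hy₁c.comp (continuous_id.add continuous_const))
    have hH0 : 0 < H 0 := by
      have ha := hle τ₁ τ₁pos.le
      have hb := h₂strict τ₁ τ₂ τ₁pos.le h12 (by linarith)
      simp only [hHdef, zero_add]
      linarith
    have hHnn : ∀ s, 0 ≤ s → 0 ≤ H s := by
      intro s hs
      have ha := hle (s + τ₁) (by linarith)
      have hb := h₂mono (s + τ₁) (s + τ₂) (by linarith) (by linarith)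
      simp only [hHdef]
      linarith
    obtain ⟨ε, εpos, hball⟩ :=
      Metric.mem_nhds_iff.mp ((isOpen_lt continuous_const hHc).mem_nhds hH0)
    set t' := min t (ε/2) with ht'def
    have ht'pos : 0 < t' := lt_min ht0 (by linarith)
    have ht't : t' ≤ t := min_le_left _ _
    have hpos1 : 0 < ∫ s in (0:ℝ)..t', H s := by
      apply intervalIntegral.intervalIntegral_pos_of_pos_on (hHc.intervalIntegrable _ _) _ ht'pos
      intro s hs
      have hmem : s ∈ Metric.ball (0:ℝ) ε := by
        rw [Real.ball_eq_Ioo]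
        constructor
        · linarith [hs.1]
        · have hs2 : s < t' := hs.2
          have : t' ≤ ε/2 := min_le_right _ _
          linarith
      exact hball hmem
    have hnn2 : 0 ≤ ∫ s in t'..t, H s :=
      intervalIntegral.integral_nonneg ht't (fun s hs => hHnn s (by linarith [hs.1]))
    have hsplit : (∫ s in (0:ℝ)..t', H s) + ∫ s in t'..t, H s = ∫ s in (0:ℝ)..t, H s :=
      intervalIntegral.integral_add_adjacent_intervals (hHc.intervalIntegrable _ _)
        (hHc.intervalIntegrable _ _)
    have hsub : ∫ s in (0:ℝ)..t, H s = y₂ t - y₁ t := by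
      simp only [hHdef]
      have c2 : Continuous fun s : ℝ => y₂ (s + τ₂) :=
        hy₂c.comp (continuous_id.add continuous_const)
      have c1 : Continuous fun s : ℝ => y₁ (s + τ₁) :=
        hy₁c.comp (continuous_id.add continuous_const)
      rw [intervalIntegral.integral_sub (c2.intervalIntegrable _ _)
        (c1.intervalIntegrable _ _)]
      rw [← i₁, ← i₂]
    linarith
  have hρ : ρ₂ < ρ₁ := by
    by_contra hcon
    push_neg at hcon
    have hkey := hstrict ρ₁ (by linarith) (le_min le_rfl hcon)
    have e1 : y₁ ρ₁ = 1 := by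
      simp only [hy₁def]
      rw [sub_self]
      exact hx₁.2.1 0 le_rfl
    have e2 : y₂ ρ₁ ≤ 1 := h₂le1 ρ₁ (by linarith)
    linarith
  refine ⟨hρ, ?_⟩
  intro t ht
  have hkey := hstrict t ht.1 (le_min (ht.2.trans hρ.le) ht.2)
  simpa only [hy₁def, hy₂def] using hkey
end
end

section
/- For every τ ∈ (1/e, 1] one has Λ(τ) > ϱ(τ) + τ, and for every τ ∈ [1, 2) one has ξ_τ > τ - 1, where ξ_τ ∈ (0, τ) is the unique root of Θ(t) := ∫_0^t x_τ(ϱ(τ) + w - τ) dw - x_τ(ϱ(τ) + t - τ) on (0, τ). -/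
open Real MeasureTheory Filter Set

noncomputable section

/-- On `[0, τ]`, the solution with unit history is `1 - t`. -/
lemma xsol_eq_one_sub {τ : ℝ} {x : ℝ → ℝ} (hx : IsXSol τ x) {t : ℝ}
    (h0 : 0 ≤ t) (h1 : t ≤ τ) : x t = 1 - t := by
  obtain ⟨hc, hhist, heq⟩ := hx
  have h := heq t h0
  have hcongr : EqOn (fun s => x (s - τ)) (fun _ => (1:ℝ)) (uIcc 0 t) := by
    intro s hs
    rw [Set.uIcc_of_le h0] at hs
    exact hhist _ (by linarith [hs.1, hs.2])
  rw [intervalIntegral.integral_congr hcongr, intervalIntegral.integral_const] at h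
  simpa using h

/-- Grönwall-type continuous induction: if `ψ(t) = ∫_0^t max(f s, ψ s) ds` with
`f ≤ 1` on `[0,b]` and `b ≤ 1`, then `ψ(t) ≤ t` on `[0,b]`. -/
lemma psi_le_id {f ψ : ℝ → ℝ} {b : ℝ}
    (hψ : ContinuousOn ψ (Ici (0:ℝ)))
    (hb1 : b ≤ 1)
    (hfc : ContinuousOn f (Icc (0:ℝ) b))
    (hf1 : ∀ s ∈ Icc (0:ℝ) b, f s ≤ 1)
    (hint : ∀ t ∈ Icc (0:ℝ) b, ψ t = ∫ s in (0:ℝ)..t, max (f s) (ψ s)) :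
    ∀ t ∈ Icc (0:ℝ) b, ψ t ≤ t := by
  by_contra hcon
  push_neg at hcon
  obtain ⟨t₂, ht₂, ht₂'⟩ := hcon
  have hb0 : (0:ℝ) ≤ b := ht₂.1.trans ht₂.2
  set g : ℝ → ℝ := fun s => max (f s) (ψ s) with hg
  have hgc : ContinuousOn g (Icc (0:ℝ) b) :=
    hfc.sup (hψ.mono (Icc_subset_Ici_self))
  have hgint : ∀ u v : ℝ, u ∈ Icc (0:ℝ) b → v ∈ Icc (0:ℝ) b →
      IntervalIntegrable g volume u v := by
    intro u v hu hv
    exact (hgc.mono (Set.uIcc_subset_Icc hu hv)).intervalIntegrable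
  set T : Set ℝ := {t | t ∈ Icc (0:ℝ) b ∧ t < ψ t} with hT
  have hTne : T.Nonempty := ⟨t₂, ht₂, ht₂'⟩
  have hTbdd : BddBelow T := ⟨0, fun t ht => ht.1.1⟩
  set t₀ : ℝ := sInf T with ht₀def
  have ht₀mem : t₀ ∈ Icc (0:ℝ) b :=
    ⟨le_csInf hTne fun t ht => ht.1.1, (csInf_le hTbdd ⟨ht₂, ht₂'⟩).trans ht₂.2⟩
  have hbelow : ∀ u, 0 ≤ u → u < t₀ → ψ u ≤ u := by
    intro u hu hut
    by_contra h
    push_neg at h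
    have : u ∈ T := ⟨⟨hu, hut.le.trans ht₀mem.2⟩, h⟩
    exact absurd (csInf_le hTbdd this) (not_le.mpr hut)
  -- ψ t₀ ≤ t₀
  have hψt₀ : ψ t₀ ≤ t₀ := by
    have h1 : ψ t₀ = ∫ s in (0:ℝ)..t₀, g s := hint t₀ ht₀mem
    have h2 : (∫ s in (0:ℝ)..t₀, g s) ≤ ∫ _ in (0:ℝ)..t₀, (1:ℝ) := by
      apply intervalIntegral.integral_mono_ae_restrict ht₀mem.1
        (hgint 0 t₀ (left_mem_Icc.mpr hb0) ht₀mem) intervalIntegrable_const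
      have hmem : ∀ᵐ x ∂(volume.restrict (Icc (0:ℝ) t₀)), x ∈ Icc (0:ℝ) t₀ :=
        ae_restrict_mem measurableSet_Icc
      have hne : ∀ᵐ x ∂(volume.restrict (Icc (0:ℝ) t₀)), x ≠ t₀ := by
        refine (MeasureTheory.ae_iff).mpr ?_
        have hs : {x : ℝ | ¬ x ≠ t₀} = {t₀} := by ext y; simp
        rw [hs]
        exact le_antisymm ((Measure.restrict_apply_le _ _).trans
          (by simp)) bot_le
      filter_upwards [hmem, hne] with x hx hxne
      have hxlt : x < t₀ := lt_of_le_of_ne hx.2 hxne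
      have hx0b : x ∈ Icc (0:ℝ) b := ⟨hx.1, hx.2.trans ht₀mem.2⟩
      exact max_le (hf1 x hx0b) ((hbelow x hx.1 hxlt).trans (by linarith [hx0b.2]))
    rw [h1]
    calc (∫ s in (0:ℝ)..t₀, g s) ≤ ∫ _ in (0:ℝ)..t₀, (1:ℝ) := h2
    _ = t₀ := by simp
  -- t₀ < b, else contradiction
  rcases eq_or_lt_of_le ht₀mem.2 with heq | hlt
  · -- t₀ = b: every element of T equals b, contradiction with ψ t₀ ≤ t₀
    have : t₂ = b := le_antisymm ht₂.2 (heq ▸ csInf_le hTbdd ⟨ht₂, ht₂'⟩)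
    rw [this] at ht₂'
    rw [heq] at hψt₀
    linarith
  · -- t₀ < b
    have hψt₀lt : ψ t₀ < 1 := lt_of_le_of_lt hψt₀ (lt_of_lt_of_le hlt hb1)
    have hcw : ContinuousWithinAt ψ (Ici (0:ℝ)) t₀ := hψ t₀ ht₀mem.1
    rw [Metric.continuousWithinAt_iff] at hcw
    obtain ⟨δ, hδ0, hδ⟩ := hcw (1 - ψ t₀) (by linarith)
    obtain ⟨t₁, ht₁T, ht₁lt⟩ := exists_lt_of_csInf_lt hTne
      (show sInf T < t₀ + δ by rw [← ht₀def]; linarith)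
    have ht₁ge : t₀ ≤ t₁ := csInf_le hTbdd ht₁T
    have ht₁gt : t₀ < t₁ := lt_of_le_of_ne ht₁ge (by
      intro h; rw [← h] at ht₁T; exact absurd ht₁T.2 (not_lt.mpr hψt₀))
    have hbound : ∀ s ∈ Icc t₀ t₁, g s ≤ 1 := by
      intro s hs
      have hs0b : s ∈ Icc (0:ℝ) b := ⟨ht₀mem.1.trans hs.1, hs.2.trans ht₁T.1.2⟩
      refine max_le (hf1 s hs0b) ?_
      have hd : dist s t₀ < δ := by
        rw [Real.dist_eq, abs_of_nonneg (by linarith [hs.1])]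
        linarith [hs.2]
      have := hδ hs0b.1 hd
      rw [Real.dist_eq] at this
      have := abs_lt.mp this
      linarith [this.2]
    have hsplit : ψ t₁ = ψ t₀ + ∫ s in t₀..t₁, g s := by
      rw [hint t₁ ⟨ht₀mem.1.trans ht₁ge, ht₁T.1.2⟩, hint t₀ ht₀mem]
      rw [intervalIntegral.integral_add_adjacent_intervals
        (hgint 0 t₀ (left_mem_Icc.mpr hb0) ht₀mem)
        (hgint t₀ t₁ ht₀mem ht₁T.1)]
    have hineq : (∫ s in t₀..t₁, g s) ≤ t₁ - t₀ := by
      have h3 : (∫ s in t₀..t₁, g s) ≤ ∫ _ in t₀..t₁, (1:ℝ) :=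
        intervalIntegral.integral_mono_on ht₁ge (hgint t₀ t₁ ht₀mem ht₁T.1)
          intervalIntegrable_const hbound
      simpa using h3
    have : ψ t₁ ≤ t₁ := by rw [hsplit]; linarith
    linarith [ht₁T.2]

theorem stmt7
    (X : ℝ → ℝ → ℝ) (hX : ∀ τ > 1 / Real.exp 1, IsXSol τ (X τ))
    (ϱ : ℝ → ℝ) (hϱ : ∀ τ, ϱ τ = firstRoot (X τ))
    (Ψ : ℝ → ℝ → ℝ)
    (hΨ : ∀ τ ∈ Ioc (1 / Real.exp 1) 2, IsPsiSol τ (ϱ τ) (X τ) (Ψ τ))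
    (Λ : ℝ → ℝ)
    (hΛ : ∀ τ ∈ Ioc (1 / Real.exp 1) 2, ϱ τ < Λ τ ∧ Ψ τ (Λ τ - ϱ τ) = 1)
    (ξ : ℝ → ℝ)
    (hξ : ∀ τ ∈ Ioc (1 / Real.exp 1) 2,
      ξ τ ∈ Ioo (0:ℝ) τ ∧
      (∫ w in (0:ℝ)..(ξ τ), X τ (ϱ τ + w - τ)) - X τ (ϱ τ + ξ τ - τ) = 0 ∧
      ∀ t ∈ Ioo (0:ℝ) τ,
        (∫ w in (0:ℝ)..t, X τ (ϱ τ + w - τ)) - X τ (ϱ τ + t - τ) = 0 → t = ξ τ) :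
    (∀ τ ∈ Ioc (1 / Real.exp 1) 1, Λ τ > ϱ τ + τ) ∧
    (∀ τ ∈ Ico (1:ℝ) 2, ξ τ > τ - 1) := by
  have hexp : (1:ℝ) / Real.exp 1 < 1 := by
    rw [div_lt_one (Real.exp_pos 1)]
    linarith [Real.add_one_le_exp 1]
  -- firstRoot = 1 when 1 ≤ τ
  have hroot1 : ∀ τ, 1 / Real.exp 1 < τ → 1 ≤ τ → ϱ τ = 1 := by
    intro τ hτe hτ1
    have hx := hX τ hτe
    rw [hϱ]
    unfold firstRoot
    have h1mem : (1:ℝ) ∈ {t : ℝ | 0 < t ∧ X τ t = 0} := by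
      refine ⟨one_pos, ?_⟩
      rw [xsol_eq_one_sub hx zero_le_one hτ1]; ring
    refine le_antisymm (csInf_le ⟨0, fun t ht => ht.1.le⟩ h1mem) ?_
    refine le_csInf ⟨1, h1mem⟩ fun t ht => ?_
    by_contra h
    push_neg at h
    have := xsol_eq_one_sub hx ht.1.le (h.le.trans hτ1)
    rw [ht.2] at this
    linarith
  constructor
  · -- Part 1
    intro τ hτ
    have hτe : 1 / Real.exp 1 < τ := hτ.1
    have hτ1 : τ ≤ 1 := hτ.2
    have hτ0 : 0 < τ := lt_trans (by positivity) hτe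
    have hτ2 : τ ∈ Ioc (1 / Real.exp 1) 2 := ⟨hτe, hτ1.trans one_le_two⟩
    have hx := hX τ hτe
    obtain ⟨hψc, hψ0, hψint, _⟩ := hΨ τ hτ2
    obtain ⟨hΛgt, hΛeq⟩ := hΛ τ hτ2
    set x := X τ with hxdef
    set ρ := ϱ τ with hρdef
    -- key bound: x (ρ + s - τ) ≤ 1 for s ∈ [0, τ]
    have hkey : ∀ s ∈ Icc (0:ℝ) τ, x (ρ + s - τ) ≤ 1 := by
      intro s hs
      rcases le_or_gt (ρ + s - τ) 0 with h | h
      · rw [hx.2.1 _ h]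
      · -- ρ + s - τ ∈ (0, ρ]; show x ≤ 1 on [0, ρ] via x ≥ 0 on [0, ρ]
        -- first, ρ ≥ 0 and zero set bounded below appropriately
        set Z : Set ℝ := {t : ℝ | 0 < t ∧ x t = 0} with hZ
        have hρZ : ρ = sInf Z := hϱ τ
        have hρnonneg : 0 ≤ ρ := by
          rw [hρZ]
          rcases Z.eq_empty_or_nonempty with he | hne
          · rw [he, Real.sInf_empty]
          · exact le_csInf hne fun t ht => ht.1.le
        have hZne : Z.Nonempty := by
          by_contra hne
          rw [not_nonempty_iff_eq_empty] at hne
          rw [hρZ, hne, Real.sInf_empty] at h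
          linarith [hs.2]
        -- every zero is ≥ τ (strictly > if τ < 1; but ≥ suffices)
        have hZge : ∀ t ∈ Z, τ ≤ t := by
          intro t ht
          by_contra hc
          push_neg at hc
          have := xsol_eq_one_sub hx ht.1.le hc.le
          rw [ht.2] at this
          have : t = 1 := by linarith
          linarith
        have hρτ : τ ≤ ρ := hρZ ▸ le_csInf hZne hZge
        -- x ≥ 0 on [0, ρ]
        have hxnonneg : ∀ u ∈ Icc (0:ℝ) ρ, 0 ≤ x u := by
          intro u hu
          by_contra hc
          push_neg at hc
          have huτ : τ < u := by
            by_contra hut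
            push_neg at hut
            have := xsol_eq_one_sub hx hu.1 hut
            nlinarith [hu.1, hτ1]
          have hxτpos : 0 < x τ := by
            rw [xsol_eq_one_sub hx hτ0.le le_rfl]
            -- need τ < 1 here; if τ = 1 then ρ = 1 = τ < u ≤ ρ impossible
            rcases lt_or_eq_of_le hτ1 with h1 | h1
            · linarith
            · exfalso
              have : ρ = 1 := hroot1 τ hτe h1.ge
              rw [this] at hu; rw [h1] at huτ
              linarith [hu.2]
          have hivt : (0:ℝ) ∈ Icc (x u) (x τ) := ⟨hc.le, hxτpos.le⟩
          have := intermediate_value_Icc' huτ.le (hx.1.continuousOn)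
          obtain ⟨c, hcmem, hcz⟩ := this hivt
          have hcZ : c ∈ Z := ⟨lt_of_lt_of_le hτ0 hcmem.1, hcz⟩
          have : ρ ≤ c := hρZ ▸ csInf_le ⟨0, fun t ht => ht.1.le⟩ hcZ
          have hcu : c = u := le_antisymm hcmem.2 (by linarith [hu.2])
          rw [hcu] at hcz
          linarith
        -- x ≤ 1 on [0, ρ]
        have hxle1 : ∀ u ∈ Icc (0:ℝ) ρ, x u ≤ 1 := by
          intro u hu
          have h := hx.2.2 u hu.1
          have hnn : 0 ≤ ∫ s in (0:ℝ)..u, x (s - τ) := by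
            apply intervalIntegral.integral_nonneg hu.1
            intro v hv
            rcases le_or_gt (v - τ) 0 with hv0 | hv0
            · rw [hx.2.1 _ hv0]; norm_num
            · exact hxnonneg _ ⟨hv0.le, by linarith [hv.2, hu.2]⟩
          rw [h]
          linarith
        exact hxle1 _ ⟨h.le, by linarith [hs.2]⟩
    -- apply the Grönwall lemma
    have hG : ∀ t ∈ Icc (0:ℝ) τ, Ψ τ t ≤ t := by
      refine psi_le_id hψc hτ1 ?_ hkey hψint
      exact (hx.1.comp
        ((continuous_const.add continuous_id).sub continuous_const)).continuousOn
    -- conclude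
    by_contra hcon
    push_neg at hcon
    have hd0 : 0 < Λ τ - ρ := by linarith
    have hdτ : Λ τ - ρ ≤ τ := by linarith
    have h1 := hG (Λ τ - ρ) ⟨hd0.le, hdτ⟩
    rw [hΛeq] at h1
    have hτeq : τ = 1 := le_antisymm hτ1 (h1.trans hdτ)
    have hdeq : Λ τ - ρ = 1 := le_antisymm (hτeq ▸ hdτ) h1
    -- sharper bound at τ = 1 : Ψ τ 1 ≤ 3/4
    have hρ1 : ρ = 1 := hroot1 τ hτe hτeq.ge
    have hψ1 : Ψ τ 1 = ∫ s in (0:ℝ)..1, max (x (ρ + s - τ)) (Ψ τ s) :=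
      hψint 1 ⟨zero_le_one, hτeq.ge⟩
    have hcongr : EqOn (fun s => max (x (ρ + s - τ)) (Ψ τ s))
        (fun s => max (1 - s) (Ψ τ s)) (uIcc (0:ℝ) 1) := by
      intro s hs
      rw [Set.uIcc_of_le zero_le_one] at hs
      have : ρ + s - τ = s := by rw [hρ1, hτeq]; ring
      simp only [this]
      rw [xsol_eq_one_sub hx hs.1 (hτeq ▸ hs.2)]
    rw [intervalIntegral.integral_congr hcongr] at hψ1
    have hint1 : IntervalIntegrable (fun s => max (1 - s) (Ψ τ s)) volume 0 1 := by
      apply ContinuousOn.intervalIntegrable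
      rw [Set.uIcc_of_le zero_le_one]
      exact ContinuousOn.sup ((continuous_const.sub continuous_id).continuousOn)
        (hψc.mono Icc_subset_Ici_self)
    have hcmax : Continuous fun s : ℝ => max (1 - s) s :=
      (continuous_const.sub continuous_id).max continuous_id
    have hint2 : IntervalIntegrable (fun s => max (1 - s) s) volume 0 1 :=
      hcmax.intervalIntegrable 0 1
    have hmono : (∫ s in (0:ℝ)..1, max (1 - s) (Ψ τ s)) ≤
        ∫ s in (0:ℝ)..1, max (1 - s) s := by
      apply intervalIntegral.integral_mono_on zero_le_one hint1 hint2
      intro s hs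
      exact max_le_max le_rfl (hG s ⟨hs.1, by rw [hτeq]; exact hs.2⟩)
    have hcomp : (∫ s in (0:ℝ)..1, max (1 - s) s) = 3 / 4 := by
      have hsplit : (∫ s in (0:ℝ)..1, max (1 - s) s) =
          (∫ s in (0:ℝ)..(1/2:ℝ), max (1 - s) s) +
          ∫ s in (1/2:ℝ)..1, max (1 - s) s := by
        rw [intervalIntegral.integral_add_adjacent_intervals
          (hcmax.intervalIntegrable _ _) (hcmax.intervalIntegrable _ _)]
      have he1 : (∫ s in (0:ℝ)..(1/2:ℝ), max (1 - s) s) =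
          ∫ s in (0:ℝ)..(1/2:ℝ), (1 - s) := by
        apply intervalIntegral.integral_congr
        intro s hs
        rw [Set.uIcc_of_le (by norm_num : (0:ℝ) ≤ 1/2)] at hs
        exact max_eq_left (by linarith [hs.2])
      have he2 : (∫ s in (1/2:ℝ)..1, max (1 - s) s) =
          ∫ s in (1/2:ℝ)..1, s := by
        apply intervalIntegral.integral_congr
        intro s hs
        rw [Set.uIcc_of_le (by norm_num : (1/2:ℝ) ≤ 1)] at hs
        exact max_eq_right (by linarith [hs.1])
      rw [hsplit, he1, he2,
        intervalIntegral.integral_sub intervalIntegrable_const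
          intervalIntegral.intervalIntegrable_id,
        integral_id, integral_id, intervalIntegral.integral_const]
      norm_num
    have h34 : Ψ τ 1 ≤ 3 / 4 := by rw [hψ1]; linarith [hmono, hcomp.le]
    rw [hdeq] at hΛeq
    linarith
  · -- Part 2
    intro τ hτ
    have hτ1 : 1 ≤ τ := hτ.1
    have hτ2 : τ < 2 := hτ.2
    have hτe : 1 / Real.exp 1 < τ := lt_of_lt_of_le hexp hτ1
    have hτI : τ ∈ Ioc (1 / Real.exp 1) 2 := ⟨hτe, hτ2.le⟩
    have hx := hX τ hτe
    obtain ⟨hξmem, hξeq, _⟩ := hξ τ hτI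
    have hρ1 : ϱ τ = 1 := hroot1 τ hτe hτ1
    by_contra hcon
    push_neg at hcon
    -- ξ τ ≤ τ - 1, so 1 + w - τ ≤ 0 for all w ∈ [0, ξ τ]
    have hξ0 : 0 < ξ τ := hξmem.1
    have hcongr : EqOn (fun w => X τ (ϱ τ + w - τ)) (fun _ => (1:ℝ))
        (uIcc (0:ℝ) (ξ τ)) := by
      intro w hw
      rw [Set.uIcc_of_le hξ0.le] at hw
      exact hx.2.1 _ (by rw [hρ1]; linarith [hw.2])
    rw [intervalIntegral.integral_congr hcongr, intervalIntegral.integral_const,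
      hx.2.1 (ϱ τ + ξ τ - τ) (by rw [hρ1]; linarith)] at hξeq
    simp only [smul_eq_mul, mul_one, sub_zero] at hξeq
    linarith
end
end
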